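/- arXiv:2404.08914 — 5 statements merged into one kernel-verified Lean document; each statement's English description precedes it below -/
import Mathlib

section
/- Let R be a commutative ring with unity having no non-trivial idempotents (its only idempotents are 0 and 1). Then: (i) if |U(R)| = 1, the clean graph Cl(R) is isomorphic to the complete graph K_2; (ii) if |U(R)| ≥ 2, two distinct vertices (e,u) and (f,v) of Cl(R) are mutually maximally distant if and only if either e = f = 0 or e = f = 1. -/
variable {V : Type*}

/-- In a graph `G`, `u` is maximally distant from `v` if `d(v,w) ≤ d(u,v)` for every
neighbour `w` of `u`. -/
def IsMaxDistFrom (G : SimpleGraph V) (u v : V) : Prop :=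
  ∀ w ∈ G.neighborSet u, G.dist v w ≤ G.dist u v

/-- `u` and `v` are mutually maximally distant in `G`. -/
def IsMMD (G : SimpleGraph V) (u v : V) : Prop :=
  IsMaxDistFrom G u v ∧ IsMaxDistFrom G v u

/-- The boundary of a graph: the set of vertices that are mutually maximally distant
from some other vertex.  This is the vertex set of the strong resolving graph. -/
def graphBoundary (G : SimpleGraph V) : Set V :=
  {u | ∃ v, u ≠ v ∧ IsMMD G u v}

/-- The strong resolving graph, realised on the full vertex set (vertices outside the
boundary are isolated): two distinct vertices are adjacent iff they are mutually
maximally distant. -/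
def srGraph (G : SimpleGraph V) : SimpleGraph V where
  Adj u v := u ≠ v ∧ IsMMD G u v
  symm := ⟨fun u v h => ⟨h.1.symm, h.2.2, h.2.1⟩⟩
  loopless := ⟨fun u h => h.1 rfl⟩

/-- The independence number of a graph: the largest cardinality of a finite set of
pairwise non-adjacent vertices. -/
noncomputable def indNum (G : SimpleGraph V) : ℕ :=
  sSup {n | ∃ s : Finset V, ((s : Set V).Pairwise fun a b => ¬ G.Adj a b) ∧ s.card = n}

/-- `S` is a strong resolving set of `G`: every pair of distinct vertices `u, v` is
strongly resolved by some `w ∈ S`, i.e. `v` lies on a shortest `u`-`w` path or `u` lies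
on a shortest `v`-`w` path. -/
def IsStrongResolvingSet (G : SimpleGraph V) (S : Set V) : Prop :=
  ∀ u v : V, u ≠ v → ∃ w ∈ S,
    G.dist u w = G.dist u v + G.dist v w ∨ G.dist v w = G.dist v u + G.dist u w

/-- The strong metric dimension of a graph: the smallest cardinality of a (finite)
strong resolving set. -/
noncomputable def sdim (G : SimpleGraph V) : ℕ :=
  sInf {n | ∃ S : Finset V, IsStrongResolvingSet G (S : Set V) ∧ S.card = n}

/-- Vertices of the clean graph: pairs `(e, u)` with `e` an idempotent and `u` a unit. -/
abbrev CleanVtx (R : Type*) [CommRing R] : Type _ := {e : R // IsIdempotentElem e} × Rˣ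

/-- The clean graph `Cl(R)` of a commutative ring `R`: distinct vertices `(e,u)`, `(f,v)`
are adjacent iff `e * f = 0` or `u * v = 1`. -/
def cleanGraph (R : Type*) [CommRing R] : SimpleGraph (CleanVtx R) where
  Adj x y := x ≠ y ∧ ((x.1 : R) * (y.1 : R) = 0 ∨ (x.2 : R) * (y.2 : R) = 1)
  symm := by
    constructor
    rintro x y ⟨hxy, h | h⟩
    · exact ⟨hxy.symm, Or.inl (by rwa [mul_comm])⟩
    · exact ⟨hxy.symm, Or.inr (by rwa [mul_comm])⟩
  loopless := ⟨fun x h => h.1 rfl⟩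

/-- The vertex set of `Cl₂(R)`: clean vertices `(e,u)` with `e ≠ 0`. -/
def clean2Set (R : Type*) [CommRing R] : Set (CleanVtx R) := {x | (x.1 : R) ≠ 0}

/-- `Cl₂(R)`, the subgraph of `Cl(R)` induced on the vertices `(e,u)` with `e ≠ 0`. -/
def clean2Graph (R : Type*) [CommRing R] : SimpleGraph (clean2Set R) :=
  SimpleGraph.induce (clean2Set R) (cleanGraph R)

/-- `U''(R)`: the set of units `u` with `u² ≠ 1`. -/
def uSecond (R : Type*) [CommRing R] : Set Rˣ := {u | (u : R) * (u : R) ≠ 1}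

/-- `|Id(R)*|`: the number of non-trivial idempotents of `R`. -/
noncomputable def idStarNum (R : Type*) [CommRing R] : ℕ :=
  {e : R | IsIdempotentElem e ∧ e ≠ 0 ∧ e ≠ 1}.ncard

/-- `|Id⊥(R)*|`: the maximum cardinality of a set of nonzero pairwise orthogonal
idempotents of `R`. -/
noncomputable def orthIdemNum (R : Type*) [CommRing R] : ℕ :=
  sSup {n | ∃ s : Finset R, (∀ e ∈ s, IsIdempotentElem e ∧ e ≠ 0) ∧
    ((s : Set R).Pairwise fun e f => e * f = 0) ∧ s.card = n}


section Helpers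

variable {R : Type*} [CommRing R] [Nontrivial R]

lemma cl_adj_left_zero {x y : CleanVtx R} (hxy : x ≠ y) (h : (x.1 : R) = 0) :
    (cleanGraph R).Adj x y := ⟨hxy, Or.inl (by rw [h, zero_mul])⟩

lemma cl_adj_right_zero {x y : CleanVtx R} (hxy : x ≠ y) (h : (y.1 : R) = 0) :
    (cleanGraph R).Adj x y := ⟨hxy, Or.inl (by rw [h, mul_zero])⟩

lemma cl_dist_eq_one {x y : CleanVtx R} (h : (cleanGraph R).Adj x y) :
    (cleanGraph R).dist x y = 1 :=
  SimpleGraph.dist_eq_one_iff_adj.mpr h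

lemma cl_dist_le_two (x y : CleanVtx R) : (cleanGraph R).dist x y ≤ 2 := by
  by_cases hxy : x = y
  · simp [hxy, SimpleGraph.dist_self]
  by_cases hadj : (cleanGraph R).Adj x y
  · rw [cl_dist_eq_one hadj]; omega
  · have hx0 : (x.1 : R) ≠ 0 := by
      intro h; exact hadj (cl_adj_left_zero hxy h)
    have hy0 : (y.1 : R) ≠ 0 := by
      intro h; exact hadj (cl_adj_right_zero hxy h)
    set z : CleanVtx R := (⟨0, IsIdempotentElem.zero⟩, 1) with hz
    have hxz : (cleanGraph R).Adj x z :=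
      cl_adj_right_zero (by intro h; exact hx0 (by rw [h])) rfl
    have hzy : (cleanGraph R).Adj z y :=
      cl_adj_left_zero (by intro h; exact hy0 (by rw [← h])) rfl
    have := SimpleGraph.dist_le ((hxz.toWalk.append hzy.toWalk))
    simpa using this

lemma cl_dist_eq_two {x y : CleanVtx R} (hxy : x ≠ y)
    (hna : ¬ (cleanGraph R).Adj x y) : (cleanGraph R).dist x y = 2 := by
  have hle := cl_dist_le_two x y
  have h1 : (cleanGraph R).dist x y ≠ 1 := by
    rw [ne_eq, SimpleGraph.dist_eq_one_iff_adj]; exact hna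
  have h0 : (cleanGraph R).dist x y ≠ 0 := by
    rw [ne_eq, SimpleGraph.dist_eq_zero_iff_eq_or_not_reachable]
    push_neg
    refine ⟨hxy, ?_⟩
    have hx0 : (x.1 : R) ≠ 0 := by
      intro h; exact hna (cl_adj_left_zero hxy h)
    have hy0 : (y.1 : R) ≠ 0 := by
      intro h; exact hna (cl_adj_right_zero hxy h)
    set z : CleanVtx R := (⟨0, IsIdempotentElem.zero⟩, 1) with hz
    have hxz : (cleanGraph R).Adj x z :=
      cl_adj_right_zero (by intro h; exact hx0 (by rw [h])) rfl
    have hzy : (cleanGraph R).Adj z y :=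
      cl_adj_left_zero (by intro h; exact hy0 (by rw [← h])) rfl
    exact (hxz.toWalk.append hzy.toWalk).reachable
  omega

/-- If one of the two has idempotent part 0, then the other is maximally distant from it. -/
lemma cl_maxdist_of_right_zero {x y : CleanVtx R} (hxy : x ≠ y) (h : (y.1 : R) = 0) :
    IsMaxDistFrom (cleanGraph R) x y := by
  intro w hw
  have hd : (cleanGraph R).dist x y = 1 := cl_dist_eq_one (cl_adj_right_zero hxy h)
  rw [hd]
  rcases eq_or_ne y w with rfl | hne
  · simp [SimpleGraph.dist_self]
  · rw [cl_dist_eq_one (cl_adj_left_zero hne h)]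

end Helpers

theorem statement_0 (R : Type*) [CommRing R] [Nontrivial R]
    (hid : ∀ e : R, IsIdempotentElem e → e = 0 ∨ e = 1) :
    (Nat.card Rˣ = 1 → Nonempty (cleanGraph R ≃g (⊤ : SimpleGraph (Fin 2)))) ∧
    (Nontrivial Rˣ → ∀ x y : CleanVtx R, x ≠ y →
      (IsMMD (cleanGraph R) x y ↔
        ((x.1 : R) = 0 ∧ (y.1 : R) = 0) ∨ ((x.1 : R) = 1 ∧ (y.1 : R) = 1))) := by
  classical
  have hco : ∀ x : CleanVtx R, (x.1 : R) = 0 ∨ (x.1 : R) = 1 := fun x => hid x.1 x.1.2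
  constructor
  · -- part (i)
    intro hcard
    haveI hsub : Subsingleton Rˣ := (Nat.card_eq_one_iff_unique.mp hcard).1
    have hne1 : ∀ x y : CleanVtx R, x ≠ y → (cleanGraph R).Adj x y := by
      intro x y hxy
      rcases hco x with h | h
      · exact cl_adj_left_zero hxy h
      rcases hco y with h' | h'
      · exact cl_adj_right_zero hxy h'
      · exfalso
        exact hxy (Prod.ext (Subtype.ext (h.trans h'.symm)) (Subsingleton.elim _ _))
    refine ⟨⟨⟨fun x => if (x.1 : R) = 0 then 0 else 1,
        fun i => if i = 0 then (⟨0, IsIdempotentElem.zero⟩, 1) else (⟨1, IsIdempotentElem.one⟩, 1),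
        ?_, ?_⟩, ?_⟩⟩
    · intro x
      rcases hco x with h | h
      · have e1 : (if ((x.1 : R) = 0) then (0 : Fin 2) else 1) = 0 := if_pos h
        simp only [e1, if_pos rfl]
        exact Prod.ext (Subtype.ext h.symm) (Subsingleton.elim _ _)
      · have h0 : (x.1 : R) ≠ 0 := by rw [h]; exact one_ne_zero
        have e1 : (if ((x.1 : R) = 0) then (0 : Fin 2) else 1) = 1 := if_neg h0
        simp only [e1, if_neg one_ne_zero]
        exact Prod.ext (Subtype.ext h.symm) (Subsingleton.elim _ _)
    · intro i
      fin_cases i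
      · simp
      · simp only [if_neg one_ne_zero]
        simp
    · intro x y
      simp only [Equiv.coe_fn_mk, SimpleGraph.top_adj]
      constructor
      · intro h
        apply hne1
        intro hxy; rw [hxy] at h; exact h rfl
      · intro h
        intro heq
        apply h.1
        rcases hco x with hx | hx <;> rcases hco y with hy | hy
        · exact Prod.ext (Subtype.ext (hx.trans hy.symm)) (Subsingleton.elim _ _)
        · rw [if_pos hx, if_neg (by rw [hy]; exact one_ne_zero)] at heq; exact absurd heq (by decide)
        · rw [if_neg (by rw [hx]; exact one_ne_zero), if_pos hy] at heq; exact absurd heq (by decide)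
        · exact Prod.ext (Subtype.ext (hx.trans hy.symm)) (Subsingleton.elim _ _)
  · -- part (ii)
    intro hnt x y hxy
    -- key lemma: if x.1 = 0 and y.1 = 1 then x is NOT maximally distant from y
    have key : ∀ a b : CleanVtx R, (a.1 : R) = 0 → (b.1 : R) = 1 →
        ¬ IsMaxDistFrom (cleanGraph R) a b := by
      intro a b ha hb hmax
      -- choose a unit t with t ≠ b.2 and (b.2 : R) * t ≠ 1
      obtain ⟨t, ht1, ht2⟩ : ∃ t : Rˣ, t ≠ b.2 ∧ (b.2 : R) * (t : R) ≠ 1 := by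
        by_cases hsq : (b.2 : R) * (b.2 : R) = 1
        · obtain ⟨t, ht⟩ := exists_ne b.2
          refine ⟨t, ht, fun hmul => ht ?_⟩
          have hu : b.2 * t = 1 :=
            Units.ext (by rw [Units.val_mul, Units.val_one]; exact hmul)
          have hs : b.2 * b.2 = 1 :=
            Units.ext (by rw [Units.val_mul, Units.val_one]; exact hsq)
          calc t = (b.2)⁻¹ := eq_inv_of_mul_eq_one_right hu
            _ = b.2 := inv_eq_of_mul_eq_one_left hs
        · refine ⟨1, fun h1 => hsq ?_, fun hmul => hsq ?_⟩
          · rw [← h1]; simp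
          · rw [Units.val_one, mul_one] at hmul; rw [hmul, one_mul]
      set w : CleanVtx R := (⟨1, IsIdempotentElem.one⟩, t) with hwdef
      have hwa : w ≠ a := by
        intro h
        have : ((1 : R)) = (a.1 : R) := by rw [← h]
        rw [ha] at this; exact one_ne_zero this
      have haw : (cleanGraph R).Adj a w := cl_adj_left_zero (Ne.symm hwa) ha
      have hwb : w ≠ b := fun h => ht1 (congrArg Prod.snd h)
      have hnadj : ¬ (cleanGraph R).Adj b w := by
        rintro ⟨-, h | h⟩
        · rw [hb, one_mul] at h
          exact one_ne_zero h
        · exact ht2 h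
      have hd2 : (cleanGraph R).dist b w = 2 := cl_dist_eq_two (Ne.symm hwb) hnadj
      have hd1 : (cleanGraph R).dist a b = 1 :=
        cl_dist_eq_one (cl_adj_left_zero (fun h => by
          rw [h] at ha; exact zero_ne_one (ha.symm.trans hb)) ha)
      have := hmax w ((cleanGraph R).mem_neighborSet a w |>.mpr haw)
      omega
    constructor
    · -- forward
      intro hmmd
      rcases hco x with hx | hx <;> rcases hco y with hy | hy
      · exact Or.inl ⟨hx, hy⟩
      · exact absurd hmmd.1 (key x y hx hy)
      · exact absurd hmmd.2 (key y x hy hx)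
      · exact Or.inr ⟨hx, hy⟩
    · -- backward
      rintro (⟨hx, hy⟩ | ⟨hx, hy⟩)
      · exact ⟨cl_maxdist_of_right_zero hxy hy, cl_maxdist_of_right_zero (Ne.symm hxy) hx⟩
      · -- both idempotent parts are 1
        have hmd : ∀ a b : CleanVtx R, a ≠ b → (a.1 : R) = 1 → (b.1 : R) = 1 →
            IsMaxDistFrom (cleanGraph R) a b := by
          intro a b hab ha hb
          intro w hw
          have hadjaw : (cleanGraph R).Adj a w := hw
          by_cases hadjab : (cleanGraph R).Adj a b
          · -- dist a b = 1; show dist b w ≤ 1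
            rw [cl_dist_eq_one hadjab]
            rcases hco w with hw0 | hw1
            · rcases eq_or_ne b w with rfl | hbw
              · simp [SimpleGraph.dist_self]
              · rw [cl_dist_eq_one (cl_adj_right_zero hbw hw0)]
            · -- w.1 = 1, so a.2 * w.2 = 1; also a.2 * b.2 = 1 so w = b
              have hmul_aw : (a.2 : R) * (w.2 : R) = 1 := by
                rcases hadjaw.2 with h | h
                · rw [ha, hw1, mul_one] at h; exact absurd h one_ne_zero
                · exact h
              have hmul_ab : (a.2 : R) * (b.2 : R) = 1 := by
                rcases hadjab.2 with h | h
                · rw [ha, hb, mul_one] at h; exact absurd h one_ne_zero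
                · exact h
              have hv : (w.2 : R) = (b.2 : R) := by
                have e1 : a.2 * w.2 = 1 :=
                  Units.ext (by rw [Units.val_mul, Units.val_one]; exact hmul_aw)
                have e2 : a.2 * b.2 = 1 :=
                  Units.ext (by rw [Units.val_mul, Units.val_one]; exact hmul_ab)
                have : w.2 = b.2 := by
                  rw [eq_inv_of_mul_eq_one_right e1, eq_inv_of_mul_eq_one_right e2]
                rw [this]
              have hwb : w = b :=
                Prod.ext (Subtype.ext (hw1.trans hb.symm)) (Units.ext hv)
              rw [hwb]
              simp [SimpleGraph.dist_self]
          · rw [cl_dist_eq_two hab hadjab]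
            exact le_trans (cl_dist_le_two b w) (le_refl 2)
        exact ⟨hmd x y hxy hx hy, hmd y x (Ne.symm hxy) hy hx⟩
end

section
/- Let R be a commutative ring with unity having some non-trivial idempotent, with U''(R) ≠ ∅ and such that Cl₂(R) is not a complete graph. Then the strong resolving graph of Cl₂(R) is isomorphic to the graph H' whose vertex set is V(Cl₂(R)) and in which two vertices (e,u), (f,v) are adjacent if and only if one of the following holds: (a) e = f = 1 and uv ≠ 1; (b) e ≠ 1, f ≠ 1, ef ≠ 0 and uv ≠ 1; (c) e = 1, f ≠ 1 and u = v ∈ U''(R). Moreover, in both cases (U''(R) empty or not), V(Cl₂(R)) equals the vertex set of the strong resolving graph of Cl₂(R). -/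
variable {V : Type*}

namespace Cl2Aux

variable {R : Type*} [CommRing R]

/-- The idempotent component of a vertex is idempotent. -/
lemma vIdem (x : ↥(clean2Set R)) : IsIdempotentElem (x.1.1 : R) := x.1.1.2

lemma vNe0 (x : ↥(clean2Set R)) : (x.1.1 : R) ≠ 0 := x.2

/-- Constructor for vertices of `Cl₂(R)`. -/
def mkV (e : R) (he : IsIdempotentElem e) (h0 : e ≠ 0) (u : Rˣ) : ↥(clean2Set R) :=
  ⟨⟨⟨e, he⟩, u⟩, h0⟩

@[simp] lemma mkV_idem (e : R) (he : IsIdempotentElem e) (h0 : e ≠ 0) (u : Rˣ) :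
    ((mkV e he h0 u).1.1 : R) = e := rfl

@[simp] lemma mkV_unit (e : R) (he : IsIdempotentElem e) (h0 : e ≠ 0) (u : Rˣ) :
    (mkV e he h0 u).1.2 = u := rfl

lemma vtx_eq_iff (x y : ↥(clean2Set R)) :
    x = y ↔ (x.1.1 : R) = (y.1.1 : R) ∧ x.1.2 = y.1.2 := by
  constructor
  · rintro rfl; exact ⟨rfl, rfl⟩
  · rintro ⟨h1, h2⟩
    exact Subtype.ext (Prod.ext (Subtype.ext h1) h2)

lemma adj_iff (x y : ↥(clean2Set R)) :
    (clean2Graph R).Adj x y ↔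
      x ≠ y ∧ ((x.1.1 : R) * (y.1.1 : R) = 0 ∨ (x.1.2 : R) * (y.1.2 : R) = 1) := by
  show (cleanGraph R).Adj x.1 y.1 ↔ _
  constructor
  · rintro ⟨h1, h2⟩
    exact ⟨fun h => h1 (by rw [h]), h2⟩
  · rintro ⟨h1, h2⟩
    exact ⟨fun h => h1 (Subtype.ext h), h2⟩

lemma adj_of {x y : ↥(clean2Set R)} (hne : x ≠ y)
    (h : (x.1.1 : R) * (y.1.1 : R) = 0 ∨ (x.1.2 : R) * (y.1.2 : R) = 1) :
    (clean2Graph R).Adj x y := (adj_iff x y).mpr ⟨hne, h⟩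

lemma not_adj {x y : ↥(clean2Set R)} (h : ¬ (clean2Graph R).Adj x y) (hne : x ≠ y) :
    (x.1.1 : R) * (y.1.1 : R) ≠ 0 ∧ (x.1.2 : R) * (y.1.2 : R) ≠ 1 := by
  rw [adj_iff] at h
  push_neg at h
  exact h hne

/-- `e * (1 - e) = 0` for idempotent `e`. -/
lemma idem_mul_one_sub {e : R} (he : IsIdempotentElem e) : e * (1 - e) = 0 := by
  have := he
  unfold IsIdempotentElem at this
  rw [mul_one_sub, this, sub_self]

lemma one_sub_ne_zero {e : R} (h : e ≠ 1) : (1 : R) - e ≠ 0 :=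
  sub_ne_zero.mpr h.symm

lemma ne_one_sub_self {e : R} (he : IsIdempotentElem e) (h0 : e ≠ 0) : e ≠ 1 - e := by
  intro h
  apply h0
  have h2 := idem_mul_one_sub he
  rw [← h] at h2
  rwa [he] at h2

lemma unit_mul_eq_one_iff (u v : Rˣ) : (u : R) * (v : R) = 1 ↔ v = u⁻¹ := by
  constructor
  · intro h
    have h2 : u * v = 1 := Units.ext (by rw [Units.val_mul, h, Units.val_one])
    exact eq_inv_of_mul_eq_one_right h2
  · rintro rfl
    exact Units.mul_inv u

lemma unit_sq_ne_one_iff (u : Rˣ) : (u : R) * (u : R) ≠ 1 ↔ u ≠ u⁻¹ :=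
  not_congr (unit_mul_eq_one_iff u u)

end Cl2Aux
namespace Cl2Aux

variable {R : Type*} [CommRing R]

/-- If `Cl₂(R)` is not complete then `R` has two distinct units. -/
lemma exists_units_ne (hnc : clean2Graph R ≠ ⊤) : ∃ a b : Rˣ, a ≠ b := by
  by_contra h
  push_neg at h
  apply hnc
  ext x y
  simp only [SimpleGraph.top_adj]
  constructor
  · exact fun hxy => hxy.ne
  · intro hne
    refine adj_of hne (Or.inr ?_)
    have h1 : x.1.2 = 1 := h _ _
    have h2 : y.1.2 = 1 := h _ _
    rw [h1, h2, Units.val_one, one_mul]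

lemma exists_unit_ne (h2 : ∃ a b : Rˣ, a ≠ b) (u : Rˣ) : ∃ t : Rˣ, t ≠ u := by
  obtain ⟨a, b, hab⟩ := h2
  by_cases ha : a = u
  · exact ⟨b, by rw [← ha]; exact hab.symm⟩
  · exact ⟨a, ha⟩

lemma exists_unit_ne_ne (h2 : ∃ a b : Rˣ, a ≠ b) (u : Rˣ) :
    ∃ t : Rˣ, t ≠ u ∧ t ≠ u⁻¹ := by
  by_cases hu : u = u⁻¹
  · obtain ⟨t, ht⟩ := exists_unit_ne h2 u
    exact ⟨t, ht, by rw [← hu]; exact ht⟩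
  · refine ⟨1, ?_, ?_⟩
    · intro h; apply hu; rw [← h]; rfl
    · intro h; apply hu
      have hu1 : u = 1 := by rw [← inv_inv u, ← h, inv_one]
      rw [hu1, inv_one]

end Cl2Aux
namespace Cl2Aux

variable {R : Type*} [CommRing R]

lemma dist_le_one_of_adj {x y : ↥(clean2Set R)} (h : (clean2Graph R).Adj x y) :
    (clean2Graph R).dist x y ≤ 1 := by
  have := SimpleGraph.dist_le (SimpleGraph.Walk.cons h SimpleGraph.Walk.nil)
  simpa using this

lemma mid_of_walk2 {V : Type*} {G : SimpleGraph V} {x y : V} (w : G.Walk x y)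
    (hw : w.length = 2) : ∃ m, G.Adj x m ∧ G.Adj m y := by
  cases w with
  | nil => simp at hw
  | cons ha p =>
    cases p with
    | nil => simp at hw
    | cons hb q =>
      cases q with
      | nil => exact ⟨_, ha, hb⟩
      | cons hc r => simp [SimpleGraph.Walk.length_cons] at hw

lemma exists_mid (x y : ↥(clean2Set R)) (hy : (y.1.1 : R) ≠ 1) (hne : x ≠ y)
    (hnadj : ¬ (clean2Graph R).Adj x y) :
    ∃ m, (clean2Graph R).Adj x m ∧ (clean2Graph R).Adj m y := by
  obtain ⟨hf0, hu1⟩ := not_adj hnadj hne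
  refine ⟨mkV (1 - (y.1.1 : R)) (vIdem y).one_sub (one_sub_ne_zero hy) (x.1.2)⁻¹, ?_, ?_⟩
  · refine adj_of ?_ (Or.inr ?_)
    · intro h
      rw [vtx_eq_iff] at h
      apply hf0
      rw [h.1, mkV_idem, mul_comm]
      exact idem_mul_one_sub (vIdem y)
    · rw [mkV_unit]
      exact Units.mul_inv _
  · refine adj_of ?_ (Or.inl ?_)
    · intro h
      rw [vtx_eq_iff] at h
      apply hu1
      rw [mkV_unit] at h
      rw [unit_mul_eq_one_iff]
      exact h.2.symm
    · rw [mkV_idem, mul_comm]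
      exact idem_mul_one_sub (vIdem y)

lemma dist_le_two (x y : ↥(clean2Set R)) (hy : (y.1.1 : R) ≠ 1) :
    (clean2Graph R).dist x y ≤ 2 := by
  by_cases hxy : x = y
  · rw [hxy, SimpleGraph.dist_self]; omega
  by_cases hadj : (clean2Graph R).Adj x y
  · exact (dist_le_one_of_adj hadj).trans (by omega)
  obtain ⟨m, ha, hb⟩ := exists_mid x y hy hxy hadj
  have := SimpleGraph.dist_le (SimpleGraph.Walk.cons ha (SimpleGraph.Walk.cons hb SimpleGraph.Walk.nil))
  simpa using this

/-- A walk of length three between two vertices whose idempotents are both `1`. -/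
lemma walk3 (e₀ : R) (he₀ : IsIdempotentElem e₀) (h0 : e₀ ≠ 0) (h1 : e₀ ≠ 1)
    (x y : ↥(clean2Set R)) (hx : (x.1.1 : R) = 1) (hy : (y.1.1 : R) = 1) :
    (clean2Graph R).dist x y ≤ 3 ∧ (clean2Graph R).Reachable x y := by
  have hxa : (clean2Graph R).Adj x (mkV e₀ he₀ h0 (x.1.2)⁻¹) := by
    refine adj_of ?_ (Or.inr ?_)
    · intro h
      rw [vtx_eq_iff] at h
      rw [hx, mkV_idem] at h
      exact h1 h.1.symm
    · rw [mkV_unit]; exact Units.mul_inv _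
  have hab : (clean2Graph R).Adj (mkV e₀ he₀ h0 (x.1.2)⁻¹)
      (mkV (1 - e₀) he₀.one_sub (one_sub_ne_zero h1) (y.1.2)⁻¹) := by
    refine adj_of ?_ (Or.inl ?_)
    · intro h
      rw [vtx_eq_iff] at h
      rw [mkV_idem, mkV_idem] at h
      exact ne_one_sub_self he₀ h0 h.1
    · rw [mkV_idem, mkV_idem]
      exact idem_mul_one_sub he₀
  have hby : (clean2Graph R).Adj (mkV (1 - e₀) he₀.one_sub (one_sub_ne_zero h1) (y.1.2)⁻¹) y := by
    refine adj_of ?_ (Or.inr ?_)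
    · intro h
      rw [vtx_eq_iff] at h
      rw [mkV_idem, hy] at h
      exact h0 (by have := h.1; rwa [sub_eq_self] at this)
    · rw [mkV_unit]; exact Units.inv_mul _
  constructor
  · have := SimpleGraph.dist_le (SimpleGraph.Walk.cons hxa (SimpleGraph.Walk.cons hab
      (SimpleGraph.Walk.cons hby SimpleGraph.Walk.nil)))
    simpa using this
  · exact ⟨SimpleGraph.Walk.cons hxa (SimpleGraph.Walk.cons hab
      (SimpleGraph.Walk.cons hby SimpleGraph.Walk.nil))⟩

lemma reachable_aux (x y : ↥(clean2Set R)) (hy : (y.1.1 : R) ≠ 1) :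
    (clean2Graph R).Reachable x y := by
  by_cases hxy : x = y
  · rw [hxy]
  by_cases hadj : (clean2Graph R).Adj x y
  · exact hadj.reachable
  obtain ⟨m, ha, hb⟩ := exists_mid x y hy hxy hadj
  exact ha.reachable.trans hb.reachable

lemma reachable_all (e₀ : R) (he₀ : IsIdempotentElem e₀) (h0 : e₀ ≠ 0) (h1 : e₀ ≠ 1)
    (x y : ↥(clean2Set R)) : (clean2Graph R).Reachable x y := by
  by_cases hy : (y.1.1 : R) = 1
  · by_cases hx : (x.1.1 : R) = 1
    · exact (walk3 e₀ he₀ h0 h1 x y hx hy).2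
    · exact (reachable_aux y x hx).symm
  · exact reachable_aux x y hy

lemma dist_le_three (e₀ : R) (he₀ : IsIdempotentElem e₀) (h0 : e₀ ≠ 0) (h1 : e₀ ≠ 1)
    (x y : ↥(clean2Set R)) : (clean2Graph R).dist x y ≤ 3 := by
  by_cases hy : (y.1.1 : R) = 1
  · by_cases hx : (x.1.1 : R) = 1
    · exact (walk3 e₀ he₀ h0 h1 x y hx hy).1
    · rw [SimpleGraph.dist_comm]
      exact (dist_le_two y x hx).trans (by omega)
  · exact (dist_le_two x y hy).trans (by omega)

lemma two_le_dist (x y : ↥(clean2Set R)) (hne : x ≠ y)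
    (hnadj : ¬ (clean2Graph R).Adj x y) (hr : (clean2Graph R).Reachable x y) :
    2 ≤ (clean2Graph R).dist x y := by
  have hd0 : (clean2Graph R).dist x y ≠ 0 :=
    SimpleGraph.dist_ne_zero_iff_ne_and_reachable.mpr ⟨hne, hr⟩
  have hd1 : (clean2Graph R).dist x y ≠ 1 :=
    fun h => hnadj (SimpleGraph.dist_eq_one_iff_adj.mp h)
  omega

lemma three_le_dist (x y : ↥(clean2Set R)) (hx : (x.1.1 : R) = 1) (hy : (y.1.1 : R) = 1)
    (hne : x ≠ y) (hu : (x.1.2 : R) * (y.1.2 : R) ≠ 1)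
    (hr : (clean2Graph R).Reachable x y) :
    3 ≤ (clean2Graph R).dist x y := by
  have hnadj : ¬ (clean2Graph R).Adj x y := by
    rw [adj_iff]
    rintro ⟨-, h | h⟩
    · rw [hx, hy, one_mul] at h
      exact vNe0 y (by rw [hy]; exact h)
    · exact hu h
  have h2 := two_le_dist x y hne hnadj hr
  have hd2 : (clean2Graph R).dist x y ≠ 2 := by
    intro hd
    obtain ⟨w, hw⟩ := hr.exists_walk_length_eq_dist
    rw [hd] at hw
    obtain ⟨m, ha, hb⟩ := mid_of_walk2 w hw
    rw [adj_iff] at ha hb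
    have hum : (x.1.2 : R) * (m.1.2 : R) = 1 := by
      rcases ha.2 with h | h
      · rw [hx, one_mul] at h
        exact absurd h (vNe0 m)
      · exact h
    have huy : (m.1.2 : R) * (y.1.2 : R) = 1 := by
      rcases hb.2 with h | h
      · rw [hy, mul_one] at h
        exact absurd h (vNe0 m)
      · exact h
    rw [unit_mul_eq_one_iff] at hum huy
    apply hne
    rw [vtx_eq_iff]
    refine ⟨hx.trans hy.symm, ?_⟩
    rw [← inv_inv x.1.2, ← hum, huy]
  omega

end Cl2Aux
namespace Cl2Aux

variable {R : Type*} [CommRing R]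

lemma not_maxDistFrom {x y w : ↥(clean2Set R)} (hadj : (clean2Graph R).Adj x w)
    (hlt : (clean2Graph R).dist x y < (clean2Graph R).dist y w) :
    ¬ IsMaxDistFrom (clean2Graph R) x y :=
  fun h => absurd (h w hadj) (not_le.mpr hlt)

lemma mmd_a (e₀ : R) (he₀ : IsIdempotentElem e₀) (h0 : e₀ ≠ 0) (h1 : e₀ ≠ 1)
    (x y : ↥(clean2Set R)) (hx : (x.1.1 : R) = 1) (hy : (y.1.1 : R) = 1)
    (hne : x ≠ y) (hu : (x.1.2 : R) * (y.1.2 : R) ≠ 1) :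
    IsMMD (clean2Graph R) x y := by
  have h3 := three_le_dist x y hx hy hne hu (reachable_all e₀ he₀ h0 h1 x y)
  constructor
  · intro w _
    exact (dist_le_three e₀ he₀ h0 h1 y w).trans h3
  · intro w _
    calc (clean2Graph R).dist x w ≤ 3 := dist_le_three e₀ he₀ h0 h1 x w
    _ ≤ (clean2Graph R).dist x y := h3
    _ = (clean2Graph R).dist y x := SimpleGraph.dist_comm ..

lemma mmd_b (e₀ : R) (he₀ : IsIdempotentElem e₀) (h0 : e₀ ≠ 0) (h1 : e₀ ≠ 1)
    (x y : ↥(clean2Set R)) (hx : (x.1.1 : R) ≠ 1) (hy : (y.1.1 : R) ≠ 1)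
    (hne : x ≠ y) (hnadj : ¬ (clean2Graph R).Adj x y) :
    IsMMD (clean2Graph R) x y := by
  have h2 := two_le_dist x y hne hnadj (reachable_all e₀ he₀ h0 h1 x y)
  constructor
  · intro w _
    calc (clean2Graph R).dist y w = (clean2Graph R).dist w y := SimpleGraph.dist_comm ..
    _ ≤ 2 := dist_le_two w y hy
    _ ≤ (clean2Graph R).dist x y := h2
  · intro w _
    calc (clean2Graph R).dist x w = (clean2Graph R).dist w x := SimpleGraph.dist_comm ..
    _ ≤ 2 := dist_le_two w x hx
    _ ≤ (clean2Graph R).dist x y := h2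
    _ = (clean2Graph R).dist y x := SimpleGraph.dist_comm ..

lemma mmd_c (e₀ : R) (he₀ : IsIdempotentElem e₀) (h0 : e₀ ≠ 0) (h1 : e₀ ≠ 1)
    (x y : ↥(clean2Set R)) (hx : (x.1.1 : R) = 1) (hy : (y.1.1 : R) ≠ 1)
    (hequ : x.1.2 = y.1.2) (hu2 : (x.1.2 : R) * (x.1.2 : R) ≠ 1) :
    IsMMD (clean2Graph R) x y := by
  have hne : x ≠ y := by
    intro h
    rw [vtx_eq_iff] at h
    exact hy (h.1 ▸ hx)
  have hnadj : ¬ (clean2Graph R).Adj x y := by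
    rw [adj_iff]
    rintro ⟨-, h | h⟩
    · rw [hx, one_mul] at h
      exact vNe0 y h
    · rw [← hequ] at h
      exact hu2 h
  have h2 := two_le_dist x y hne hnadj (reachable_all e₀ he₀ h0 h1 x y)
  constructor
  · intro w _
    calc (clean2Graph R).dist y w = (clean2Graph R).dist w y := SimpleGraph.dist_comm ..
    _ ≤ 2 := dist_le_two w y hy
    _ ≤ (clean2Graph R).dist x y := h2
  · intro w hw
    rw [SimpleGraph.mem_neighborSet] at hw
    have hd : (clean2Graph R).dist x w ≤ 2 := by
      by_cases hw1 : (w.1.1 : R) = 1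
      · rw [adj_iff] at hw
        have huw : (y.1.2 : R) * (w.1.2 : R) = 1 := by
          rcases hw.2 with h | h
          · rw [hw1, mul_one] at h
            exact absurd h (vNe0 y)
          · exact h
        rw [unit_mul_eq_one_iff] at huw
        have hadj : (clean2Graph R).Adj x w := by
          refine adj_of ?_ (Or.inr ?_)
          · intro h
            rw [vtx_eq_iff] at h
            rw [unit_sq_ne_one_iff] at hu2
            exact hu2 (h.2.trans (huw.trans (congrArg Inv.inv hequ.symm)))
          · rw [huw, ← hequ]
            exact Units.mul_inv _
        exact (dist_le_one_of_adj hadj).trans (by omega)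
      · exact dist_le_two x w hw1
    calc (clean2Graph R).dist x w ≤ 2 := hd
    _ ≤ (clean2Graph R).dist x y := h2
    _ = (clean2Graph R).dist y x := SimpleGraph.dist_comm ..

end Cl2Aux
namespace Cl2Aux

variable {R : Type*} [CommRing R]

lemma idem_mul {a b : R} (ha : IsIdempotentElem a) (hb : IsIdempotentElem b) :
    IsIdempotentElem (a * b) := by
  show a * b * (a * b) = a * b
  calc a * b * (a * b) = (a * a) * (b * b) := by ring
  _ = a * b := by rw [ha, hb]

lemma not_maxDist_of_adj (e₀ : R) (he₀ : IsIdempotentElem e₀) (h0 : e₀ ≠ 0) (h1 : e₀ ≠ 1)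
    {x y w : ↥(clean2Set R)} (hxy : (clean2Graph R).Adj x y)
    (hxw : (clean2Graph R).Adj x w) (hyw : y ≠ w)
    (hnadj : ¬ (clean2Graph R).Adj y w) : ¬ IsMaxDistFrom (clean2Graph R) x y := by
  apply not_maxDistFrom hxw
  have ha := two_le_dist y w hyw hnadj (reachable_all e₀ he₀ h0 h1 y w)
  have hb := dist_le_one_of_adj hxy
  omega

/-- Necessity, case `e = f = 1`: if `uv = 1` then not MMD. -/
lemma nec_ones (e₀ : R) (he₀ : IsIdempotentElem e₀) (h0 : e₀ ≠ 0) (h1 : e₀ ≠ 1)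
    (x y : ↥(clean2Set R)) (hx : (x.1.1 : R) = 1) (hy : (y.1.1 : R) = 1)
    (hne : x ≠ y) (hu1 : (x.1.2 : R) * (y.1.2 : R) = 1) :
    ¬ IsMMD (clean2Graph R) x y := by
  intro hmmd
  have huxy : x.1.2 ≠ y.1.2 := by
    intro h
    exact hne (by rw [vtx_eq_iff]; exact ⟨hx.trans hy.symm, h⟩)
  have hxy : (clean2Graph R).Adj x y := adj_of hne (Or.inr hu1)
  have hxw : (clean2Graph R).Adj x (mkV e₀ he₀ h0 (x.1.2)⁻¹) := by
    refine adj_of ?_ (Or.inr ?_)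
    · intro h
      rw [vtx_eq_iff] at h
      rw [hx, mkV_idem] at h
      exact h1 h.1.symm
    · rw [mkV_unit]; exact Units.mul_inv _
  refine not_maxDist_of_adj e₀ he₀ h0 h1 hxy hxw ?_ ?_ hmmd.1
  · intro h
    rw [vtx_eq_iff] at h
    rw [hy, mkV_idem] at h
    exact h1 h.1.symm
  · rw [adj_iff]
    rintro ⟨-, h | h⟩
    · rw [hy, one_mul, mkV_idem] at h
      exact h0 h
    · rw [mkV_unit, unit_mul_eq_one_iff] at h
      exact huxy (inv_injective h)

/-- Necessity, case `e = 1 ≠ f`: if not (`u = v` and `u ∈ U''`) then not MMD. -/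
lemma nec_mixed (e₀ : R) (he₀ : IsIdempotentElem e₀) (h0 : e₀ ≠ 0) (h1 : e₀ ≠ 1)
    (h2u : ∃ a b : Rˣ, a ≠ b)
    (x y : ↥(clean2Set R)) (hx : (x.1.1 : R) = 1) (hy : (y.1.1 : R) ≠ 1)
    (hne : x ≠ y)
    (hnot : ¬ (x.1.2 = y.1.2 ∧ (x.1.2 : R) * (x.1.2 : R) ≠ 1)) :
    ¬ IsMMD (clean2Graph R) x y := by
  intro hmmd
  have hone : (1 : R) ≠ 0 := hx ▸ vNe0 x
  by_cases hequ : x.1.2 = y.1.2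
  · -- then `u² = 1`; violate `y` maximally distant from `x`
    have hu2 : (x.1.2 : R) * (x.1.2 : R) = 1 := by
      by_contra h
      exact hnot ⟨hequ, h⟩
    have hxy : (clean2Graph R).Adj x y := by
      refine adj_of hne (Or.inr ?_)
      rw [← hequ]; exact hu2
    obtain ⟨t, ht⟩ := exists_unit_ne h2u x.1.2
    have hinv : x.1.2 = (x.1.2)⁻¹ := by
      rw [unit_mul_eq_one_iff] at hu2; exact hu2
    refine not_maxDist_of_adj e₀ he₀ h0 h1 (w := mkV (1 - (y.1.1 : R)) (vIdem y).one_sub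
      (one_sub_ne_zero hy) t) hxy.symm ?_ ?_ ?_ hmmd.2
    · refine adj_of ?_ (Or.inl ?_)
      · intro h
        rw [vtx_eq_iff] at h
        rw [mkV_idem] at h
        exact ne_one_sub_self (vIdem y) (vNe0 y) h.1
      · rw [mkV_idem]
        exact idem_mul_one_sub (vIdem y)
    · intro h
      rw [vtx_eq_iff] at h
      rw [hx, mkV_idem] at h
      exact vNe0 y (by linear_combination h.1)
    · rw [adj_iff]
      rintro ⟨-, h | h⟩
      · rw [hx, one_mul, mkV_idem] at h
        exact one_sub_ne_zero hy h
      · rw [mkV_unit, unit_mul_eq_one_iff] at h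
        exact ht (h.trans hinv.symm)
  · -- `u ≠ v`
    by_cases hu1 : (x.1.2 : R) * (y.1.2 : R) = 1
    · -- adjacent; violate `x` maximally distant from `y`
      have hxy : (clean2Graph R).Adj x y := adj_of hne (Or.inr hu1)
      have hyinv : y.1.2 = (x.1.2)⁻¹ := by rwa [unit_mul_eq_one_iff] at hu1
      have hxw : (clean2Graph R).Adj x (mkV 1 IsIdempotentElem.one hone (x.1.2)⁻¹) := by
        refine adj_of ?_ (Or.inr ?_)
        · intro h
          rw [vtx_eq_iff] at h
          rw [mkV_unit] at h
          exact hequ (h.2.trans hyinv.symm)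
        · rw [mkV_unit]; exact Units.mul_inv _
      refine not_maxDist_of_adj e₀ he₀ h0 h1 hxy hxw ?_ ?_ hmmd.1
      · intro h
        rw [vtx_eq_iff] at h
        rw [mkV_idem] at h
        exact hy h.1
      · rw [adj_iff]
        rintro ⟨-, h | h⟩
        · rw [mkV_idem, mul_one] at h
          exact vNe0 y h
        · rw [mkV_unit, unit_mul_eq_one_iff] at h
          exact hequ (inv_injective h)
    · -- distance two; violate `y` maximally distant from `x` using distance three
      set w : ↥(clean2Set R) := mkV 1 IsIdempotentElem.one hone (y.1.2)⁻¹ with hw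
      have hyw : (clean2Graph R).Adj y w := by
        refine adj_of ?_ (Or.inr ?_)
        · intro h
          rw [vtx_eq_iff] at h
          rw [hw, mkV_idem] at h
          exact hy h.1
        · rw [hw, mkV_unit]; exact Units.mul_inv _
      have hxw_ne : x ≠ w := by
        intro h
        rw [vtx_eq_iff] at h
        rw [hw, mkV_unit] at h
        exact hu1 (by rw [unit_mul_eq_one_iff]; exact (inv_eq_iff_eq_inv.mpr h.2).symm)
      have hxw_u : (x.1.2 : R) * ((w.1.2 : Rˣ) : R) ≠ 1 := by
        intro hcon
        rw [unit_mul_eq_one_iff] at hcon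
        rw [hw, mkV_unit] at hcon
        exact hequ (inv_injective hcon).symm
      have h3 := three_le_dist x w hx (by rw [hw, mkV_idem]) hxw_ne hxw_u
        (reachable_all e₀ he₀ h0 h1 x w)
      have h2 : (clean2Graph R).dist y x ≤ 2 := by
        rw [SimpleGraph.dist_comm]
        exact dist_le_two x y hy
      exact not_maxDistFrom hyw (by omega) hmmd.2

/-- Necessity, case `e ≠ 1 ≠ f`: if adjacent then not MMD. -/
lemma nec_b (e₀ : R) (he₀ : IsIdempotentElem e₀) (h0 : e₀ ≠ 0) (h1 : e₀ ≠ 1)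
    (h2u : ∃ a b : Rˣ, a ≠ b)
    (x y : ↥(clean2Set R)) (hx : (x.1.1 : R) ≠ 1) (hy : (y.1.1 : R) ≠ 1)
    (hxy : (clean2Graph R).Adj x y) : ¬ IsMMD (clean2Graph R) x y := by
  intro hmmd
  have hone : (1 : R) ≠ 0 := fun h => h0 (by rw [← mul_one e₀, h, mul_zero])
  have hxx : (x.1.1 : R) * (x.1.1 : R) = (x.1.1 : R) := vIdem x
  have hyy : (y.1.1 : R) * (y.1.1 : R) = (y.1.1 : R) := vIdem y
  by_cases hequ : x.1.2 = y.1.2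
  · obtain ⟨t, ht, ht'⟩ := exists_unit_ne_ne h2u x.1.2
    by_cases hee : (x.1.1 : R) * (y.1.1 : R) = (y.1.1 : R)
    · -- `g = ex * (1 - ey)`; violate `y` maximally distant from `x`
      have hexy : (x.1.1 : R) ≠ (y.1.1 : R) := by
        intro h
        exact hxy.ne (by rw [vtx_eq_iff]; exact ⟨h, hequ⟩)
      have heex : (x.1.1 : R) * (y.1.1 : R) ≠ (x.1.1 : R) := by
        intro h
        exact hexy (h.symm.trans hee)
      have hg0 : (x.1.1 : R) * (1 - (y.1.1 : R)) ≠ 0 := by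
        intro h
        exact heex (by linear_combination -h)
      refine not_maxDist_of_adj e₀ he₀ h0 h1 (w := mkV ((x.1.1 : R) * (1 - (y.1.1 : R)))
        (idem_mul (vIdem x) (vIdem y).one_sub) hg0 t) hxy.symm ?_ ?_ ?_ hmmd.2
      · refine adj_of ?_ (Or.inl ?_)
        · intro h
          rw [vtx_eq_iff, mkV_unit] at h
          exact ht (by rw [← h.2, ← hequ])
        · rw [mkV_idem]
          have h' : (y.1.1 : R) * (1 - (y.1.1 : R)) = 0 := idem_mul_one_sub (vIdem y)
          linear_combination (x.1.1 : R) * h'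
      · intro h
        rw [vtx_eq_iff, mkV_unit] at h
        exact ht h.2.symm
      · rw [adj_iff]
        rintro ⟨-, h | h⟩
        · rw [mkV_idem] at h
          exact hg0 (by linear_combination h - (1 - (y.1.1 : R)) * hxx)
        · rw [mkV_unit, unit_mul_eq_one_iff] at h
          exact ht' h
    · -- `g = ey * (1 - ex)`; violate `x` maximally distant from `y`
      have hg0 : (y.1.1 : R) * (1 - (x.1.1 : R)) ≠ 0 := by
        intro h
        exact hee (by linear_combination -h)
      refine not_maxDist_of_adj e₀ he₀ h0 h1 (w := mkV ((y.1.1 : R) * (1 - (x.1.1 : R)))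
        (idem_mul (vIdem y) (vIdem x).one_sub) hg0 t) hxy ?_ ?_ ?_ hmmd.1
      · refine adj_of ?_ (Or.inl ?_)
        · intro h
          rw [vtx_eq_iff, mkV_unit] at h
          exact ht h.2.symm
        · rw [mkV_idem]
          have h' : (x.1.1 : R) * (1 - (x.1.1 : R)) = 0 := idem_mul_one_sub (vIdem x)
          linear_combination (y.1.1 : R) * h'
      · intro h
        rw [vtx_eq_iff, mkV_unit] at h
        exact ht (by rw [← h.2, hequ])
      · rw [adj_iff]
        rintro ⟨-, h | h⟩
        · rw [mkV_idem] at h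
          exact hg0 (by linear_combination h - (1 - (x.1.1 : R)) * hyy)
        · rw [mkV_unit, unit_mul_eq_one_iff] at h
          exact ht' (h.trans (congrArg Inv.inv hequ.symm))
  · -- `u ≠ v`; violate `x` maximally distant from `y` with `w = (1, u⁻¹)`
    have hxw : (clean2Graph R).Adj x (mkV 1 IsIdempotentElem.one hone (x.1.2)⁻¹) := by
      refine adj_of ?_ (Or.inr ?_)
      · intro h
        rw [vtx_eq_iff] at h
        rw [mkV_idem] at h
        exact hx h.1
      · rw [mkV_unit]; exact Units.mul_inv _
    refine not_maxDist_of_adj e₀ he₀ h0 h1 hxy hxw ?_ ?_ hmmd.1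
    · intro h
      rw [vtx_eq_iff] at h
      rw [mkV_idem] at h
      exact hy h.1
    · rw [adj_iff]
      rintro ⟨-, h | h⟩
      · rw [mkV_idem, mul_one] at h
        exact vNe0 y h
      · rw [mkV_unit, unit_mul_eq_one_iff] at h
        exact hequ (inv_injective h)

end Cl2Aux
theorem statement_4 (R : Type*) [CommRing R]
    (hid : ∃ e : R, IsIdempotentElem e ∧ e ≠ 0 ∧ e ≠ 1)
    (hnc : clean2Graph R ≠ ⊤) :
    (uSecond R ≠ ∅ → ∀ x y : clean2Set R, x ≠ y →
      ((srGraph (clean2Graph R)).Adj x y ↔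
        ((x.1.1 : R) = 1 ∧ (y.1.1 : R) = 1 ∧ (x.1.2 : R) * (y.1.2 : R) ≠ 1) ∨
        ((x.1.1 : R) ≠ 1 ∧ (y.1.1 : R) ≠ 1 ∧ (x.1.1 : R) * (y.1.1 : R) ≠ 0 ∧
          (x.1.2 : R) * (y.1.2 : R) ≠ 1) ∨
        ((x.1.1 : R) = 1 ∧ (y.1.1 : R) ≠ 1 ∧ x.1.2 = y.1.2 ∧ x.1.2 ∈ uSecond R) ∨
        ((y.1.1 : R) = 1 ∧ (x.1.1 : R) ≠ 1 ∧ x.1.2 = y.1.2 ∧ x.1.2 ∈ uSecond R))) ∧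
    (∀ x : clean2Set R, x ∈ graphBoundary (clean2Graph R)) := by
  obtain ⟨e₀, he₀, h0, h1⟩ := hid
  have h2u := Cl2Aux.exists_units_ne hnc
  constructor
  · intro _ x y hxy
    constructor
    · rintro ⟨-, hmmd⟩
      by_cases hx : (x.1.1 : R) = 1
      · by_cases hy : (y.1.1 : R) = 1
        · refine Or.inl ⟨hx, hy, fun hu1 => ?_⟩
          exact Cl2Aux.nec_ones e₀ he₀ h0 h1 x y hx hy hxy hu1 hmmd
        · have hp : x.1.2 = y.1.2 ∧ (x.1.2 : R) * (x.1.2 : R) ≠ 1 := by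
            by_contra hcon
            exact Cl2Aux.nec_mixed e₀ he₀ h0 h1 h2u x y hx hy hxy hcon hmmd
          exact Or.inr (Or.inr (Or.inl ⟨hx, hy, hp.1, hp.2⟩))
      · by_cases hy : (y.1.1 : R) = 1
        · have hmmd' : IsMMD (clean2Graph R) y x := ⟨hmmd.2, hmmd.1⟩
          have hp : y.1.2 = x.1.2 ∧ (y.1.2 : R) * (y.1.2 : R) ≠ 1 := by
            by_contra hcon
            exact Cl2Aux.nec_mixed e₀ he₀ h0 h1 h2u y x hy hx hxy.symm hcon hmmd'
          refine Or.inr (Or.inr (Or.inr ⟨hy, hx, hp.1.symm, ?_⟩))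
          show (x.1.2 : R) * (x.1.2 : R) ≠ 1
          rw [← hp.1]
          exact hp.2
        · have hnadj : ¬ (clean2Graph R).Adj x y :=
            fun h => Cl2Aux.nec_b e₀ he₀ h0 h1 h2u x y hx hy h hmmd
          have hna := Cl2Aux.not_adj hnadj hxy
          exact Or.inr (Or.inl ⟨hx, hy, hna.1, hna.2⟩)
    · rintro (⟨hx, hy, hu⟩ | ⟨hx, hy, hf, hu⟩ | ⟨hx, hy, hequ, hu2⟩ | ⟨hy, hx, hequ, hu2⟩)
      · exact ⟨hxy, Cl2Aux.mmd_a e₀ he₀ h0 h1 x y hx hy hxy hu⟩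
      · refine ⟨hxy, Cl2Aux.mmd_b e₀ he₀ h0 h1 x y hx hy hxy ?_⟩
        rw [Cl2Aux.adj_iff]
        rintro ⟨-, h | h⟩
        exacts [hf h, hu h]
      · exact ⟨hxy, Cl2Aux.mmd_c e₀ he₀ h0 h1 x y hx hy hequ hu2⟩
      · have hu2' : (y.1.2 : R) * (y.1.2 : R) ≠ 1 := by
          rw [← hequ]
          exact hu2
        have h := Cl2Aux.mmd_c e₀ he₀ h0 h1 y x hy hx hequ.symm hu2'
        exact ⟨hxy, h.2, h.1⟩
  · intro x
    by_cases hx : (x.1.1 : R) = 1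
    · by_cases hu2 : (x.1.2 : R) * (x.1.2 : R) = 1
      · obtain ⟨t, ht⟩ := Cl2Aux.exists_unit_ne h2u x.1.2
        have hone : (1 : R) ≠ 0 := hx ▸ Cl2Aux.vNe0 x
        have hinv : x.1.2 = (x.1.2)⁻¹ := by
          rwa [Cl2Aux.unit_mul_eq_one_iff] at hu2
        have hne : x ≠ Cl2Aux.mkV 1 IsIdempotentElem.one hone t := by
          intro h
          rw [Cl2Aux.vtx_eq_iff, Cl2Aux.mkV_unit] at h
          exact ht h.2.symm
        refine ⟨Cl2Aux.mkV 1 IsIdempotentElem.one hone t, hne, ?_⟩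
        refine Cl2Aux.mmd_a e₀ he₀ h0 h1 x _ hx (by rw [Cl2Aux.mkV_idem]) hne ?_
        rw [Cl2Aux.mkV_unit]
        intro h
        rw [Cl2Aux.unit_mul_eq_one_iff] at h
        exact ht (h.trans hinv.symm)
      · refine ⟨Cl2Aux.mkV e₀ he₀ h0 x.1.2, ?_, ?_⟩
        · intro h
          rw [Cl2Aux.vtx_eq_iff, Cl2Aux.mkV_idem, hx] at h
          exact h1 h.1.symm
        · exact Cl2Aux.mmd_c e₀ he₀ h0 h1 x _ hx
            (by rw [Cl2Aux.mkV_idem]; exact h1) rfl hu2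
    · obtain ⟨t, ht, ht'⟩ := Cl2Aux.exists_unit_ne_ne h2u x.1.2
      have hne : x ≠ Cl2Aux.mkV (x.1.1 : R) (Cl2Aux.vIdem x) (Cl2Aux.vNe0 x) t := by
        intro h
        rw [Cl2Aux.vtx_eq_iff, Cl2Aux.mkV_unit] at h
        exact ht h.2.symm
      refine ⟨Cl2Aux.mkV (x.1.1 : R) (Cl2Aux.vIdem x) (Cl2Aux.vNe0 x) t, hne, ?_⟩
      refine Cl2Aux.mmd_b e₀ he₀ h0 h1 x _ hx (by rw [Cl2Aux.mkV_idem]; exact hx) hne ?_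
      rw [Cl2Aux.adj_iff]
      rintro ⟨-, h | h⟩
      · rw [Cl2Aux.mkV_idem] at h
        exact Cl2Aux.vNe0 x (by rw [← Cl2Aux.vIdem x]; exact h)
      · rw [Cl2Aux.mkV_unit, Cl2Aux.unit_mul_eq_one_iff] at h
        exact ht' h
end

section
/- Let R be a commutative ring with unity. The strong metric dimension of the clean graph Cl(R) is finite if and only if the graph Cl(R) is finite; likewise, if R has a non-trivial idempotent (so that Cl₂(R) is connected), the strong metric dimension of Cl₂(R) is finite if and only if Cl₂(R) is finite. -/
variable {V : Type*}

/-!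
In a connected graph a strong resolving set `S` is resolving, so when the diameter `D` is
finite each vertex is determined by its vector of distances to `S`, which lies in
`{0, …, D}^S`; a finite `S` therefore forces finitely many vertices, and conversely the whole
vertex set is always strongly resolving. Both clean graphs have finite diameter: `Cl(R)` at
most 2 since `(0, 1)` is adjacent to every other vertex, and `Cl₂(R)` at most 3 once `R` has a
non-trivial idempotent.
-/

section StrongResolving

open SimpleGraph

variable {V : Type*} {G : SimpleGraph V} {S : Set V}

lemma isStrongResolvingSet_univ (G : SimpleGraph V) : IsStrongResolvingSet G Set.univ :=
  fun _ v _ => ⟨v, Set.mem_univ v, Or.inl (by rw [dist_self, add_zero])⟩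

/-- If `u ≠ v` had the same distance to the vertex `w` strongly resolving them, then
`d(u, v) = 0`. -/
lemma IsStrongResolvingSet.injective_dist (hG : G.Preconnected)
    (hS : IsStrongResolvingSet G S) : Function.Injective fun v (w : S) => G.dist v w := by
  intro u v huv
  by_contra hne
  obtain ⟨w, hw, hres⟩ := hS u v hne
  have heq : G.dist u w = G.dist v w := congrFun huv ⟨w, hw⟩
  have hpos : 0 < G.dist u v := (hG u v).pos_dist_of_ne hne
  have hsymm : G.dist v u = G.dist u v := dist_comm
  omega

lemma IsStrongResolvingSet.finite (hG : G.ediam ≠ ⊤) (hSfin : S.Finite)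
    (hS : IsStrongResolvingSet G S) : Finite V := by
  have := hSfin.to_subtype
  refine Finite.of_injective (fun v (w : S) => (⟨G.dist v w, ?_⟩ : Fin (G.diam + 1))) ?_
  · exact Nat.lt_succ_of_le (dist_le_diam hG)
  · intro u v huv
    exact IsStrongResolvingSet.injective_dist (preconnected_of_ediam_ne_top hG) hS
      (funext fun w => congrArg Fin.val (congrFun huv w))

lemma exists_finite_isStrongResolvingSet_iff (hG : G.ediam ≠ ⊤) :
    (∃ S : Set V, S.Finite ∧ IsStrongResolvingSet G S) ↔ Finite V :=
  ⟨fun ⟨_, hSfin, hS⟩ => IsStrongResolvingSet.finite hG hSfin hS,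
    fun _ => ⟨Set.univ, Set.toFinite _, isStrongResolvingSet_univ G⟩⟩

end StrongResolving

section CleanGraph

open SimpleGraph

variable {R : Type*} [CommRing R]

lemma cleanGraph_adj_or_eq {x y : CleanVtx R}
    (h : (x.1 : R) * (y.1 : R) = 0 ∨ (x.2 : R) * (y.2 : R) = 1) :
    (cleanGraph R).Adj x y ∨ x = y :=
  or_iff_not_imp_right.2 fun hxy => ⟨hxy, h⟩

lemma clean2Graph_edist_le_one {x y : clean2Set R}
    (h : (x.1.1 : R) * (y.1.1 : R) = 0 ∨ (x.1.2 : R) * (y.1.2 : R) = 1) :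
    (clean2Graph R).edist x y ≤ 1 :=
  edist_le_one_iff_adj_or_eq.2 ((cleanGraph_adj_or_eq h).imp id Subtype.ext)

lemma cleanGraph_ediam_le_two : (cleanGraph R).ediam ≤ 2 := by
  let z : CleanVtx R := (⟨0, IsIdempotentElem.zero⟩, 1)
  have hz : (cleanGraph R).eccent z ≤ 1 :=
    (eccent_le_one_iff z).2 fun _ hne => ⟨hne, Or.inl (zero_mul _)⟩
  calc (cleanGraph R).ediam ≤ 2 * (cleanGraph R).eccent z := ediam_le_two_mul_eccent z
    _ ≤ 2 * 1 := by gcongr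
    _ = 2 := mul_one 2

/-- For a non-trivial idempotent `e`, the path `(f, u) — (e, u⁻¹) — (1 - e, v⁻¹) — (g, v)`
joins any two vertices of `Cl₂(R)`. -/
lemma clean2Graph_ediam_le_three {e : R} (he : IsIdempotentElem e) (he0 : e ≠ 0)
    (he1 : e ≠ 1) : (clean2Graph R).ediam ≤ 3 := by
  refine ediam_le_of_edist_le fun x y => ?_
  let a : clean2Set R := ⟨(⟨e, he⟩, x.1.2⁻¹), he0⟩
  let b : clean2Set R := ⟨(⟨1 - e, he.one_sub⟩, y.1.2⁻¹), sub_ne_zero.2 he1.symm⟩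
  have hxa : (clean2Graph R).edist x a ≤ 1 := clean2Graph_edist_le_one (Or.inr x.1.2.mul_inv)
  have hab : (clean2Graph R).edist a b ≤ 1 :=
    clean2Graph_edist_le_one (Or.inl he.mul_one_sub_self)
  have hby : (clean2Graph R).edist b y ≤ 1 := clean2Graph_edist_le_one (Or.inr y.1.2.inv_mul)
  calc (clean2Graph R).edist x y
      ≤ (clean2Graph R).edist x b + (clean2Graph R).edist b y := SimpleGraph.edist_triangle
    _ ≤ (clean2Graph R).edist x a + (clean2Graph R).edist a b + (clean2Graph R).edist b y := by
        gcongr; exact SimpleGraph.edist_triangle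
    _ ≤ 1 + 1 + 1 := add_le_add (add_le_add hxa hab) hby
    _ = 3 := by norm_num

end CleanGraph

theorem statement_12 (R : Type*) [CommRing R] :
    ((∃ S : Set (CleanVtx R), S.Finite ∧ IsStrongResolvingSet (cleanGraph R) S) ↔
      Finite (CleanVtx R)) ∧
    ((∃ e : R, IsIdempotentElem e ∧ e ≠ 0 ∧ e ≠ 1) →
      ((∃ S : Set (clean2Set R), S.Finite ∧ IsStrongResolvingSet (clean2Graph R) S) ↔
        Finite (clean2Set R))) := by
  refine ⟨exists_finite_isStrongResolvingSet_iff ?_, ?_⟩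
  · exact ne_top_of_le_ne_top (by decide) cleanGraph_ediam_le_two
  · rintro ⟨e, he, he0, he1⟩
    exact exists_finite_isStrongResolvingSet_iff
      (ne_top_of_le_ne_top (by decide) (clean2Graph_ediam_le_three he he0 he1))
end

section
/- Let R be a commutative Artinian ring with unity. Then the clean graph Cl(R) is a finite graph if and only if the ring R is finite (equivalently, Cl₂(R) is finite if and only if R is finite). -/
variable {V : Type*}

open IsArtinianRing in
lemma finite_of_finite_units (R : Type*) [CommRing R] [IsArtinianRing R]
    [Finite Rˣ] : Finite R := by
  classical
  set N := nilradical R with hN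
  -- N is finite
  have hNfin : Finite N := by
    apply Finite.of_injective (fun n : N => (IsNilpotent.isUnit_one_add
      (mem_nilradical.mp n.2)).unit)
    intro a b hab
    have := congrArg (Units.val) hab
    simp only [IsUnit.unit_spec] at this
    exact Subtype.ext (by linear_combination this)
  -- units of R ⧸ N are finite, via surjection from Rˣ
  have hSu : Finite (R ⧸ N)ˣ := by
    apply Finite.of_surjective (α := Rˣ) (Units.map (Ideal.Quotient.mk N : R →+* R ⧸ N))
    intro v
    obtain ⟨x, hx⟩ := Ideal.Quotient.mk_surjective (v : R ⧸ N)
    obtain ⟨y, hy⟩ := Ideal.Quotient.mk_surjective ((v⁻¹ : (R ⧸ N)ˣ) : R ⧸ N)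
    have hxy : x * y - 1 ∈ N := by
      rw [← Ideal.Quotient.eq_zero_iff_mem]
      simp [hx, hy]
    have hux : IsUnit x := by
      have h1 : IsUnit (x * y) := by
        have : x * y = 1 + (x * y - 1) := by ring
        rw [this]
        exact IsNilpotent.isUnit_one_add (mem_nilradical.mp hxy)
      exact isUnit_of_mul_isUnit_left (by rwa [mul_comm] at h1)
    refine ⟨hux.unit, Units.ext ?_⟩
    simp [hx]
  -- R ⧸ N is finite
  have hSfin : Finite (R ⧸ N) := by
    have : Finite (MaximalSpectrum R) := inferInstance
    letI : ∀ I : MaximalSpectrum R, Field (R ⧸ I.asIdeal) :=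
      fun I => fieldOfSubtypeIsMaximal R I
    set e := quotNilradicalEquivPi R
    have hPiU : Finite (∀ I : MaximalSpectrum R, R ⧸ I.asIdeal)ˣ :=
      Finite.of_equiv _ (Units.mapEquiv e.toMulEquiv).toEquiv
    have hcomp : ∀ I : MaximalSpectrum R, Finite (R ⧸ I.asIdeal) := by
      intro I
      haveI hIu : Finite (R ⧸ I.asIdeal)ˣ := by
        apply Finite.of_surjective (α := (∀ I : MaximalSpectrum R, R ⧸ I.asIdeal)ˣ)
          (Units.map (Pi.evalRingHom (fun J : MaximalSpectrum R => R ⧸ J.asIdeal) I : _ →+* R ⧸ I.asIdeal))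
        intro v
        refine ⟨⟨Function.update 1 I (v : R ⧸ I.asIdeal),
          Function.update 1 I ((v⁻¹ : (R ⧸ I.asIdeal)ˣ) : R ⧸ I.asIdeal), ?_, ?_⟩, Units.ext ?_⟩
        · funext J
          rcases eq_or_ne J I with rfl | h
          · simp
          · simp [Function.update_of_ne h]
        · funext J
          rcases eq_or_ne J I with rfl | h
          · simp
          · simp [Function.update_of_ne h]
        · simp [Units.map]
      apply Finite.of_injective (fun x : R ⧸ I.asIdeal =>
        if h : x = 0 then (Sum.inr () : (R ⧸ I.asIdeal)ˣ ⊕ Unit)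
        else Sum.inl (IsUnit.unit (isUnit_iff_ne_zero.mpr h)))
      intro a b hab
      by_cases ha : a = 0 <;> by_cases hb : b = 0
      · rw [ha, hb]
      · simp [ha, hb] at hab
      · simp [ha, hb] at hab
      · simp only [dif_neg ha, dif_neg hb, Sum.inl.injEq] at hab
        simpa using congrArg Units.val hab
    exact Finite.of_equiv _ e.symm.toEquiv
  -- combine
  have : ∀ y : R ⧸ N, Finite {x : R // Ideal.Quotient.mk N x = y} := by
    intro y
    obtain ⟨x₀, rfl⟩ := Ideal.Quotient.mk_surjective y
    apply Finite.of_injective (fun x : {x : R // Ideal.Quotient.mk N x = Ideal.Quotient.mk N x₀} =>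
      (⟨x.1 - x₀, (Ideal.Quotient.eq).mp x.2⟩ : N))
    intro a b hab
    exact Subtype.ext (by have := congrArg Subtype.val hab; dsimp at this; linear_combination this)
  exact Finite.of_equiv _ (Equiv.sigmaFiberEquiv (Ideal.Quotient.mk N))

lemma finite_cleanvtx_of_finite (R : Type*) [CommRing R] [Finite R] :
    Finite (CleanVtx R) := by
  have : Finite Rˣ := Finite.of_injective (Units.val : Rˣ → R) Units.val_injective
  exact Finite.instProd

theorem statement_15 (R : Type*) [CommRing R] [IsArtinianRing R] :
    (Finite (CleanVtx R) ↔ Finite R) ∧ (Finite (clean2Set R) ↔ Finite R) := by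
  constructor
  · constructor
    · intro h
      have : Finite Rˣ := Finite.of_injective
        (fun u : Rˣ => ((⟨1, IsIdempotentElem.one⟩, u) : CleanVtx R))
        (fun a b hab => by simpa using congrArg Prod.snd hab)
      exact finite_of_finite_units R
    · intro h
      exact finite_cleanvtx_of_finite R
  · constructor
    · intro h
      rcases subsingleton_or_nontrivial R with hs | hn
      · exact Finite.of_subsingleton
      · have : Finite Rˣ := Finite.of_injective
          (fun u : Rˣ => (⟨(⟨1, IsIdempotentElem.one⟩, u), one_ne_zero⟩ : clean2Set R))
          (fun a b hab => by simpa using congrArg (fun x => (Subtype.val x).2) hab)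
        exact finite_of_finite_units R
    · intro h
      have := finite_cleanvtx_of_finite R
      exact Subtype.finite
end

section
/- Let R ≅ R₁ × R₂ × ⋯ × Rₙ (n ≥ 2) be a finite commutative non-local ring with unity, where each Rᵢ is a local ring, and suppose U''(R) = ∅. Then: (i) if |U(R)| = 1, then sdim(Cl₂(R)) = 2ⁿ − 2; (ii) if |U(R)| ≥ 2, then sdim(Cl₂(R)) = (2ⁿ − 1)|U(R)| − 2ⁿ + 1. -/
variable {V : Type*}

section GenericGraph

variable {V : Type*} {G : SimpleGraph V} {u v : V}

lemma aux_dist_two_mid (h : G.dist u v = 2) : ∃ w, G.Adj u w ∧ G.Adj w v := by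
  obtain ⟨p, hp⟩ := SimpleGraph.exists_walk_of_dist_ne_zero (by omega : G.dist u v ≠ 0)
  rw [h] at hp
  cases p with
  | nil => simp at hp
  | cons ha q =>
    cases q with
    | nil => simp at hp
    | cons hb r =>
      simp only [SimpleGraph.Walk.length_cons] at hp
      have h0 := SimpleGraph.Walk.eq_of_length_eq_zero (p := r) (by omega)
      subst h0
      exact ⟨_, ha, hb⟩

lemma aux_exists_adj_dist_lt (h : G.dist u v ≠ 0) :
    ∃ w, G.Adj u w ∧ G.dist w v + 1 ≤ G.dist u v := by
  obtain ⟨p, hp⟩ := SimpleGraph.exists_walk_of_dist_ne_zero h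
  cases p with
  | nil => rw [← hp] at h; simp at h
  | cons ha q =>
    refine ⟨_, ha, ?_⟩
    have h2 := SimpleGraph.dist_le q
    simp only [SimpleGraph.Walk.length_cons] at hp
    omega

lemma aux_srs_mem_of_mmd (hc : G.Connected) {S : Set V}
    (hS : IsStrongResolvingSet G S) {x y : V} (hxy : x ≠ y) (h : IsMMD G x y) :
    x ∈ S ∨ y ∈ S := by
  obtain ⟨w, hwS, hw | hw⟩ := hS x y hxy
  · by_cases hwy : w = y
    · exact Or.inr (hwy ▸ hwS)
    · exfalso
      have hd : G.dist y w ≠ 0 := fun h0 =>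
        hwy ((hc.dist_eq_zero_iff).mp h0).symm
      obtain ⟨z, hz, hzd⟩ := aux_exists_adj_dist_lt hd
      have h1 : G.dist x z ≤ G.dist y x := h.2 z hz
      have h2 : G.dist x w ≤ G.dist x z + G.dist z w := hc.dist_triangle
      have h3 : G.dist y x = G.dist x y := SimpleGraph.dist_comm ..
      omega
  · by_cases hwx : w = x
    · exact Or.inl (hwx ▸ hwS)
    · exfalso
      have hd : G.dist x w ≠ 0 := fun h0 =>
        hwx ((hc.dist_eq_zero_iff).mp h0).symm
      obtain ⟨z, hz, hzd⟩ := aux_exists_adj_dist_lt hd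
      have h1 : G.dist y z ≤ G.dist x y := h.1 z hz
      have h2 : G.dist y w ≤ G.dist y z + G.dist z w := hc.dist_triangle
      have h3 : G.dist y x = G.dist x y := SimpleGraph.dist_comm ..
      omega

end GenericGraph
section CleanAux

variable {A : Type*} [CommRing A]

/-- idempotent component of a vertex of `Cl₂`. -/
def cE (x : clean2Set A) : A := (x : CleanVtx A).1.1

/-- unit component of a vertex of `Cl₂`. -/
def cU (x : clean2Set A) : Aˣ := (x : CleanVtx A).2

lemma cE_idem (x : clean2Set A) : IsIdempotentElem (cE x) := (x : CleanVtx A).1.2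

lemma cE_ne_zero (x : clean2Set A) : cE x ≠ 0 := x.2

lemma vtx_ext {x y : clean2Set A} (h1 : cE x = cE y) (h2 : cU x = cU y) : x = y :=
  Subtype.ext (Prod.ext_iff.mpr ⟨Subtype.ext h1, h2⟩)

/-- build a vertex of `Cl₂`. -/
def vtx (e : A) (he : IsIdempotentElem e) (h0 : e ≠ 0) (u : Aˣ) : clean2Set A :=
  ⟨(⟨e, he⟩, u), h0⟩

@[simp] lemma cE_vtx (e : A) (he) (h0) (u : Aˣ) : cE (vtx e he h0 u) = e := rfl
@[simp] lemma cU_vtx (e : A) (he) (h0) (u : Aˣ) : cU (vtx e he h0 u) = u := rfl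

lemma unit_mul_iff (hu : ∀ u : Aˣ, u * u = 1) {u v : Aˣ} :
    (u : A) * v = 1 ↔ u = v := by
  constructor
  · intro h
    have h1 : u * v = 1 := Units.ext (by simpa using h)
    calc u = u * (v * v) := by rw [hu v, mul_one]
    _ = (u * v) * v := (mul_assoc ..).symm
    _ = v := by rw [h1, one_mul]
  · rintro rfl
    have := congrArg (Units.val) (hu u)
    simpa using this

lemma c2_adj_iff (hu : ∀ u : Aˣ, u * u = 1) {x y : clean2Set A} :
    (clean2Graph A).Adj x y ↔ x ≠ y ∧ (cE x * cE y = 0 ∨ cU x = cU y) := by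
  have h0 : (clean2Graph A).Adj x y ↔
      ((x : CleanVtx A) ≠ y ∧ (cE x * cE y = 0 ∨ (cU x : A) * cU y = 1)) := Iff.rfl
  rw [h0, unit_mul_iff hu, Subtype.coe_injective.ne_iff]

end CleanAux
section CleanDist

variable {A : Type*} [CommRing A]

lemma c2_reach_dist_le_two (hu : ∀ u : Aˣ, u * u = 1) {x y : clean2Set A}
    (hx1 : cE x ≠ 1) :
    (clean2Graph A).Reachable x y ∧ (clean2Graph A).dist x y ≤ 2 := by
  by_cases hxy : x = y
  · subst hxy; exact ⟨SimpleGraph.Reachable.refl x, by simp [SimpleGraph.dist_self]⟩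
  by_cases hadj : (clean2Graph A).Adj x y
  · exact ⟨hadj.reachable, by rw [SimpleGraph.dist_eq_one_iff_adj.mpr hadj]; omega⟩
  have hne : cE x * cE y ≠ 0 ∧ cU x ≠ cU y := by
    by_contra hcon
    rw [not_and_or, not_not, not_not] at hcon
    exact hadj ((c2_adj_iff hu).mpr ⟨hxy, hcon⟩)
  set w : clean2Set A :=
    vtx (1 - cE x) (cE_idem x).one_sub (sub_ne_zero.mpr (Ne.symm hx1)) (cU y) with hw
  have hadj1 : (clean2Graph A).Adj x w := by
    refine (c2_adj_iff hu).mpr ⟨?_, Or.inl ?_⟩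
    · intro h
      exact hne.2 (by rw [h]; rfl)
    · show cE x * (1 - cE x) = 0
      rw [mul_sub, mul_one, cE_idem x, sub_self]
  have hadj2 : (clean2Graph A).Adj w y := by
    refine (c2_adj_iff hu).mpr ⟨?_, Or.inr rfl⟩
    intro h
    apply hne.1
    have h2 : cE y = 1 - cE x := by rw [← h]; rfl
    rw [h2, mul_sub, mul_one, cE_idem x, sub_self]
  exact ⟨⟨SimpleGraph.Walk.cons hadj1 (SimpleGraph.Walk.cons hadj2 SimpleGraph.Walk.nil)⟩,
    le_trans (SimpleGraph.dist_le
      (SimpleGraph.Walk.cons hadj1 (SimpleGraph.Walk.cons hadj2 SimpleGraph.Walk.nil))) (by simp)⟩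

variable (hu : ∀ u : Aˣ, u * u = 1)
  {e₀ : A} (h₀ : IsIdempotentElem e₀) (h₀0 : e₀ ≠ 0) (h₀1 : e₀ ≠ 1)

include hu h₀ h₀0 h₀1 in
lemma c2_walk3 {x y : clean2Set A} (hx : cE x = 1) (hy : cE y = 1)
    (hxy : cU x ≠ cU y) : ∃ p : (clean2Graph A).Walk x y, p.length = 3 := by
  have h₀1' : (1:A) - e₀ ≠ 1 := fun h => h₀0 (sub_eq_self.mp h)
  set w1 : clean2Set A := vtx e₀ h₀ h₀0 (cU x) with hw1
  set w2 : clean2Set A := vtx (1 - e₀) h₀.one_sub (sub_ne_zero.mpr (Ne.symm h₀1)) (cU y) with hw2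
  have ha1 : (clean2Graph A).Adj x w1 := by
    refine (c2_adj_iff hu).mpr ⟨?_, Or.inr rfl⟩
    intro h
    exact h₀1 (((congrArg cE h).symm).trans hx)
  have ha2 : (clean2Graph A).Adj w1 w2 := by
    refine (c2_adj_iff hu).mpr ⟨?_, Or.inl ?_⟩
    · intro h
      have h2 := congrArg cU h
      exact hxy h2
    · show e₀ * (1 - e₀) = 0
      rw [mul_sub, mul_one, h₀, sub_self]
  have ha3 : (clean2Graph A).Adj w2 y := by
    refine (c2_adj_iff hu).mpr ⟨?_, Or.inr rfl⟩
    intro h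
    exact h₀1' ((congrArg cE h).trans hy)
  exact ⟨SimpleGraph.Walk.cons ha1 (SimpleGraph.Walk.cons ha2 (SimpleGraph.Walk.cons ha3
    SimpleGraph.Walk.nil)), by simp⟩

include hu h₀ h₀0 h₀1 in
lemma c2_connected [Nontrivial A] : (clean2Graph A).Connected := by
  rw [SimpleGraph.connected_iff]
  constructor
  · intro x y
    by_cases hx1 : cE x ≠ 1
    · exact (c2_reach_dist_le_two hu hx1).1
    by_cases hy1 : cE y ≠ 1
    · exact ((c2_reach_dist_le_two hu hy1).1).symm
    rw [not_not] at hx1 hy1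
    by_cases huv : cU x = cU y
    · exact (vtx_ext (hx1.trans hy1.symm) huv) ▸ SimpleGraph.Reachable.refl x
    · obtain ⟨p, -⟩ := c2_walk3 hu h₀ h₀0 h₀1 hx1 hy1 huv
      exact ⟨p⟩
  · exact ⟨vtx 1 IsIdempotentElem.one one_ne_zero 1⟩

include hu h₀ h₀0 h₀1 in
lemma c2_dist_ones [Nontrivial A] {x y : clean2Set A} (hx : cE x = 1) (hy : cE y = 1)
    (hxy : cU x ≠ cU y) : (clean2Graph A).dist x y = 3 := by
  have hconn := c2_connected hu h₀ h₀0 h₀1 (A := A)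
  have hne : x ≠ y := fun h => hxy (by rw [h])
  have hd0 : (clean2Graph A).dist x y ≠ 0 := Nat.pos_iff_ne_zero.mp (hconn.pos_dist_of_ne hne)
  have hd1 : (clean2Graph A).dist x y ≠ 1 := by
    intro h
    obtain ⟨-, h2 | h2⟩ := (c2_adj_iff hu).mp (SimpleGraph.dist_eq_one_iff_adj.mp h)
    · rw [hx, hy, mul_one] at h2; exact one_ne_zero h2
    · exact hxy h2
  have hd2 : (clean2Graph A).dist x y ≠ 2 := by
    intro h
    obtain ⟨w, hw1, hw2⟩ := aux_dist_two_mid h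
    obtain ⟨-, ha | ha⟩ := (c2_adj_iff hu).mp hw1
    · rw [hx, one_mul] at ha; exact cE_ne_zero w ha
    obtain ⟨-, hb | hb⟩ := (c2_adj_iff hu).mp hw2
    · rw [hy, mul_one] at hb; exact cE_ne_zero w hb
    · exact hxy (ha.trans hb)
  obtain ⟨p, hp⟩ := c2_walk3 hu h₀ h₀0 h₀1 hx hy hxy
  have := SimpleGraph.dist_le p
  omega

lemma c2_dist_same_idem (hu : ∀ u : Aˣ, u * u = 1) {x y : clean2Set A} (hxy : x ≠ y)
    (he : cE x = cE y) (h1 : cE x ≠ 1) : (clean2Graph A).dist x y = 2 := by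
  obtain ⟨hr, hle⟩ := c2_reach_dist_le_two hu h1 (y := y)
  have hd0 : (clean2Graph A).dist x y ≠ 0 := Nat.pos_iff_ne_zero.mp (hr.pos_dist_of_ne hxy)
  have hd1 : (clean2Graph A).dist x y ≠ 1 := by
    intro h
    obtain ⟨-, h2 | h2⟩ := (c2_adj_iff hu).mp (SimpleGraph.dist_eq_one_iff_adj.mp h)
    · rw [← he, cE_idem x] at h2; exact cE_ne_zero x h2
    · exact hxy (vtx_ext he h2)
  omega

lemma c2_mmd_same_idem (hu : ∀ u : Aˣ, u * u = 1) {x y : clean2Set A} (hxy : x ≠ y)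
    (he : cE x = cE y) (h1 : cE x ≠ 1) : IsMMD (clean2Graph A) x y := by
  have h1y : cE y ≠ 1 := he ▸ h1
  constructor
  · intro w _
    rw [c2_dist_same_idem hu hxy he h1]
    exact (c2_reach_dist_le_two hu h1y).2
  · intro w _
    rw [SimpleGraph.dist_comm (u := y) (v := x), c2_dist_same_idem hu hxy he h1]
    exact (c2_reach_dist_le_two hu h1).2

include hu h₀ h₀0 h₀1 in
lemma c2_mmd_ones [Nontrivial A] {x y : clean2Set A} (hx : cE x = 1) (hy : cE y = 1)
    (hxy : cU x ≠ cU y) : IsMMD (clean2Graph A) x y := by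
  have key : ∀ {a b : clean2Set A}, cE a = 1 → cU a ≠ cU b →
      ∀ w ∈ (clean2Graph A).neighborSet a, (clean2Graph A).dist b w ≤ 3 := by
    intro a b ha hab w hw
    have hadj : (clean2Graph A).Adj a w := hw
    have hw1 : cE w ≠ 1 := by
      intro h
      obtain ⟨hne, hc | hc⟩ := (c2_adj_iff hu).mp hadj
      · rw [ha, one_mul] at hc; exact cE_ne_zero w hc
      · exact hne (vtx_ext (ha.trans h.symm) hc)
    have := (c2_reach_dist_le_two hu hw1 (y := b)).2
    rw [SimpleGraph.dist_comm]
    omega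
  constructor
  · intro w hw
    rw [c2_dist_ones hu h₀ h₀0 h₀1 hx hy hxy]
    exact key hx hxy w hw
  · intro w hw
    rw [SimpleGraph.dist_comm (u := y) (v := x), c2_dist_ones hu h₀ h₀0 h₀1 hx hy hxy]
    exact key hy (Ne.symm hxy) w hw

end CleanDist
section Counting

lemma local_idem_cases {B : Type*} [CommRing B] [IsLocalRing B] {a : B} (ha : a * a = a) :
    a = 0 ∨ a = 1 := by
  rcases IsLocalRing.isUnit_or_isUnit_one_sub_self a with h | h
  · right
    exact h.mul_left_cancel (by rw [mul_one]; exact ha)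
  · left
    refine h.mul_left_cancel ?_
    rw [mul_zero, sub_mul, one_mul, ha, sub_self]

lemma card_idem_star {n : ℕ} (R : Fin n → Type*) [∀ i, CommRing (R i)]
    [∀ i, IsLocalRing (R i)] :
    Nat.card {e : (∀ i, R i) // IsIdempotentElem e ∧ e ≠ 0} = 2 ^ n - 1 := by
  classical
  set φ : (Fin n → Bool) → (∀ i, R i) := fun b i => if b i then 1 else 0 with hφ
  have hidem : ∀ b, IsIdempotentElem (φ b) := by
    intro b
    funext i
    by_cases h : b i <;> simp [φ, h, Pi.mul_apply]
  have hinj : Function.Injective φ := by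
    intro b b' h
    funext i
    have hi := congrFun h i
    simp only [φ] at hi
    cases hb : b i <;> cases hb' : b' i <;> rw [hb, hb'] at hi <;> simp_all
  have hzero : ∀ b, φ b = 0 ↔ b = fun _ => false := by
    intro b
    constructor
    · intro h
      funext i
      have hi := congrFun h i
      simp only [φ] at hi
      cases hb : b i
      · rfl
      · rw [hb] at hi; simp at hi
    · rintro rfl
      funext i
      simp [φ]
  have hsurj : ∀ e : (∀ i, R i), IsIdempotentElem e → ∃ b, φ b = e := by
    intro e he
    refine ⟨fun i => if e i = 1 then true else false, funext fun i => ?_⟩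
    rcases local_idem_cases (show e i * e i = e i from congrFun he i) with h | h
    · by_cases h1 : e i = 1
      · simp [φ, h1]
      · simp [φ, h1, h]
    · simp [φ, h]
  have hbij : Function.Bijective (fun b : {b : Fin n → Bool // b ≠ fun _ => false} =>
      (⟨φ b.1, hidem b.1, fun h0 => b.2 ((hzero b.1).mp h0)⟩ :
        {e : (∀ i, R i) // IsIdempotentElem e ∧ e ≠ 0})) := by
    constructor
    · intro b b' h
      exact Subtype.ext (hinj (congrArg Subtype.val h))
    · rintro ⟨e, he, he0⟩
      obtain ⟨b, rfl⟩ := hsurj e he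
      exact ⟨⟨b, fun h0 => he0 ((hzero b).mpr h0)⟩, rfl⟩
  rw [← Nat.card_congr (Equiv.ofBijective _ hbij)]
  rw [Nat.card_eq_fintype_card, Fintype.card_subtype_compl, Fintype.card_subtype_eq]
  simp [Fintype.card_fun]

end Counting
section SdimCases

variable {A : Type*} [CommRing A]

lemma c2_resolve_pair (hu : ∀ u : Aˣ, u * u = 1) {x y : clean2Set A} {b : Aˣ}
    (hbx : b ≠ cU x) (hcu : cU x = cU y) (hxy : x ≠ y) (hV : cE y * (1 - cE x) ≠ 0) :
    ∃ w : clean2Set A, cU w = b ∧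
      (clean2Graph A).dist y w = (clean2Graph A).dist y x + (clean2Graph A).dist x w := by
  have hx1 : cE x ≠ 1 := fun h => hV (by rw [h, sub_self, mul_zero])
  have hg0 : (1 : A) - cE x ≠ 0 := sub_ne_zero.mpr (Ne.symm hx1)
  set w : clean2Set A := vtx (1 - cE x) (cE_idem x).one_sub hg0 b with hwdef
  have hwx : w ≠ x := by
    intro h
    exact hbx (congrArg cU h)
  have hadj_xw : (clean2Graph A).Adj x w := by
    refine (c2_adj_iff hu).mpr ⟨Ne.symm hwx, Or.inl ?_⟩
    show cE x * (1 - cE x) = 0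
    rw [mul_sub, mul_one, cE_idem x, sub_self]
  have hadj_yx : (clean2Graph A).Adj y x := by
    exact (c2_adj_iff hu).mpr ⟨Ne.symm hxy, Or.inr hcu.symm⟩
  have hyw : y ≠ w := by
    intro h
    have h2 := congrArg cU h
    rw [← hcu] at h2
    exact hbx h2.symm
  have hw1 : cE w ≠ 1 := by
    intro h
    have h2 : (1 : A) - cE x = 1 := h
    exact cE_ne_zero x (sub_eq_self.mp h2)
  have hd2 : (clean2Graph A).dist y w = 2 := by
    obtain ⟨hr, hle⟩ := c2_reach_dist_le_two hu hw1 (y := y)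
    have hd0 : (clean2Graph A).dist y w ≠ 0 :=
      Nat.pos_iff_ne_zero.mp (hr.symm.pos_dist_of_ne hyw)
    have hd1 : (clean2Graph A).dist y w ≠ 1 := by
      intro h
      obtain ⟨-, hc | hc⟩ := (c2_adj_iff hu).mp (SimpleGraph.dist_eq_one_iff_adj.mp h)
      · exact hV hc
      · rw [← hcu] at hc
        exact hbx hc.symm
    have hcm : (clean2Graph A).dist y w = (clean2Graph A).dist w y := SimpleGraph.dist_comm ..
    omega
  refine ⟨w, rfl, ?_⟩
  rw [hd2, SimpleGraph.dist_eq_one_iff_adj.mpr hadj_yx, SimpleGraph.dist_eq_one_iff_adj.mpr hadj_xw]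

lemma sdim_case1 [Finite A] [Nontrivial A] (hu : ∀ u : Aˣ, u * u = 1)
    (hm : Nat.card Aˣ = 1) :
    sdim (clean2Graph A) = Nat.card (clean2Set A) - 1 := by
  classical
  have hft : Fintype (clean2Set A) := Fintype.ofFinite _
  have hsub : Subsingleton Aˣ := (Nat.card_eq_one_iff_unique.mp hm).1
  have hadj : ∀ x y : clean2Set A, x ≠ y → (clean2Graph A).Adj x y :=
    fun x y hxy => (c2_adj_iff hu).mpr ⟨hxy, Or.inr (Subsingleton.elim _ _)⟩
  set x₀ : clean2Set A := vtx 1 IsIdempotentElem.one one_ne_zero 1 with hx₀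
  set S : Finset (clean2Set A) := Finset.univ.erase x₀ with hSdef
  have hSRS : IsStrongResolvingSet (clean2Graph A) (S : Set (clean2Set A)) := by
    intro u v huv
    by_cases hv : v = x₀
    · refine ⟨u, ?_, Or.inr (by rw [SimpleGraph.dist_self, add_zero])⟩
      simp only [hSdef, Finset.coe_erase, Set.mem_diff, Set.mem_singleton_iff]
      exact ⟨Finset.mem_coe.mpr (Finset.mem_univ u), fun h => huv (h.trans hv.symm)⟩
    · refine ⟨v, ?_, Or.inl (by rw [SimpleGraph.dist_self, add_zero])⟩
      simp only [hSdef, Finset.coe_erase, Set.mem_diff, Set.mem_singleton_iff]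
      exact ⟨Finset.mem_coe.mpr (Finset.mem_univ v), hv⟩
  apply le_antisymm
  · calc sdim (clean2Graph A) ≤ S.card := Nat.sInf_le ⟨S, hSRS, rfl⟩
      _ = Nat.card (clean2Set A) - 1 := by
        rw [hSdef, Finset.card_erase_of_mem (Finset.mem_univ _), Finset.card_univ,
          Nat.card_eq_fintype_card]
  · refine le_csInf ⟨Fintype.card (clean2Set A), Finset.univ, ?_, Finset.card_univ⟩ ?_
    · intro u v huv
      exact ⟨v, by simp, Or.inl (by rw [SimpleGraph.dist_self, add_zero])⟩
    · rintro c ⟨T, hT, rfl⟩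
      have hcompl : ∀ x ∈ Tᶜ, ∀ y ∈ Tᶜ, x = y := by
        intro x hx y hy
        by_contra hxy
        obtain ⟨w, hwT, hw⟩ := hT x y hxy
        have hwT' : w ∈ T := hwT
        have hwx : w ≠ x := fun h => Finset.mem_compl.mp hx (h ▸ hwT')
        have hwy : w ≠ y := fun h => Finset.mem_compl.mp hy (h ▸ hwT')
        have d1 : (clean2Graph A).dist x y = 1 :=
          SimpleGraph.dist_eq_one_iff_adj.mpr (hadj _ _ hxy)
        have d1' : (clean2Graph A).dist y x = 1 :=
          SimpleGraph.dist_eq_one_iff_adj.mpr (hadj _ _ (Ne.symm hxy))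
        have d2 : (clean2Graph A).dist x w = 1 :=
          SimpleGraph.dist_eq_one_iff_adj.mpr (hadj _ _ (Ne.symm hwx))
        have d3 : (clean2Graph A).dist y w = 1 :=
          SimpleGraph.dist_eq_one_iff_adj.mpr (hadj _ _ (Ne.symm hwy))
        rcases hw with hw | hw <;> omega
      have h1 : Tᶜ.card ≤ 1 := Finset.card_le_one.mpr hcompl
      have h2 : Tᶜ.card = Fintype.card (clean2Set A) - T.card := Finset.card_compl T
      have h3 : T.card ≤ Fintype.card (clean2Set A) := Finset.card_le_univ T
      rw [Nat.card_eq_fintype_card]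
      omega

lemma sdim_case2 [Finite A] [Nontrivial A] (hu : ∀ u : Aˣ, u * u = 1)
    {e₀ : A} (h₀ : IsIdempotentElem e₀) (h₀0 : e₀ ≠ 0) (h₀1 : e₀ ≠ 1)
    (hm : 2 ≤ Nat.card Aˣ) :
    sdim (clean2Graph A) =
      Nat.card (clean2Set A) - Nat.card {e : A // IsIdempotentElem e ∧ e ≠ 0} := by
  classical
  have hft : Fintype (clean2Set A) := Fintype.ofFinite _
  have hftE : Fintype {e : A // IsIdempotentElem e ∧ e ≠ 0} := Fintype.ofFinite _
  have hconn : (clean2Graph A).Connected := c2_connected hu h₀ h₀0 h₀1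
  set u₀ : Aˣ := 1 with hu₀
  obtain ⟨b, hb⟩ : ∃ b : Aˣ, b ≠ u₀ := by
    by_contra h
    push_neg at h
    have : Subsingleton Aˣ := ⟨fun a c => (h a).trans (h c).symm⟩
    have := Nat.card_eq_one_iff_unique.mpr ⟨this, ⟨u₀⟩⟩
    omega
  set T : Finset (clean2Set A) := Finset.univ.filter (fun x => cU x = u₀) with hTdef
  have hTmem : ∀ x : clean2Set A, x ∈ T ↔ cU x = u₀ := by
    intro x
    simp [hTdef]
  have hTcard : T.card = Nat.card {e : A // IsIdempotentElem e ∧ e ≠ 0} := by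
    rw [hTdef, ← Fintype.card_subtype, ← Nat.card_eq_fintype_card]
    exact Nat.card_congr
      { toFun := fun x => ⟨cE x.1, cE_idem x.1, cE_ne_zero x.1⟩
        invFun := fun e => ⟨vtx e.1 e.2.1 e.2.2 u₀, rfl⟩
        left_inv := fun x => Subtype.ext (vtx_ext rfl x.2.symm)
        right_inv := fun e => rfl }
  set S : Finset (clean2Set A) := Tᶜ with hSdef
  have hSmem : ∀ x : clean2Set A, x ∈ S ↔ cU x ≠ u₀ := by
    intro x
    rw [hSdef, Finset.mem_compl, hTmem]
  have hSRS : IsStrongResolvingSet (clean2Graph A) (S : Set (clean2Set A)) := by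
    intro u v huv
    by_cases hvS : v ∈ S
    · exact ⟨v, hvS, Or.inl (by rw [SimpleGraph.dist_self, add_zero])⟩
    by_cases huS : u ∈ S
    · exact ⟨u, huS, Or.inr (by rw [SimpleGraph.dist_self, add_zero])⟩
    -- both have unit u₀
    have hcu : cU u = u₀ := by
      by_contra h
      exact huS ((hSmem u).mpr h)
    have hcv : cU v = u₀ := by
      by_contra h
      exact hvS ((hSmem v).mpr h)
    have hbne : b ≠ cU u := hcu ▸ hb
    have hbnv : b ≠ cU v := hcv ▸ hb
    have hW : cE v * (1 - cE u) ≠ 0 ∨ cE u * (1 - cE v) ≠ 0 := by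
      by_contra h
      push_neg at h
      obtain ⟨h1, h2⟩ := h
      rw [mul_sub, mul_one, sub_eq_zero] at h1 h2
      exact huv (vtx_ext (h2.trans ((mul_comm _ _).trans h1.symm)) (hcu.trans hcv.symm))
    rcases hW with hW | hW
    · obtain ⟨w, hwb, hwd⟩ := c2_resolve_pair hu hbne (hcu.trans hcv.symm) huv hW
      exact ⟨w, (hSmem w).mpr (hwb ▸ hb), Or.inr hwd⟩
    · obtain ⟨w, hwb, hwd⟩ := c2_resolve_pair hu hbnv (hcv.trans hcu.symm) (Ne.symm huv) hW
      exact ⟨w, (hSmem w).mpr (hwb ▸ hb), Or.inl hwd⟩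
  apply le_antisymm
  · calc sdim (clean2Graph A) ≤ S.card := Nat.sInf_le ⟨S, hSRS, rfl⟩
      _ = _ := by
        rw [hSdef, Finset.card_compl, hTcard]
        simp [Nat.card_eq_fintype_card]
  · refine le_csInf ⟨Fintype.card (clean2Set A), Finset.univ, ?_, Finset.card_univ⟩ ?_
    · intro u v huv
      exact ⟨v, by simp, Or.inl (by rw [SimpleGraph.dist_self, add_zero])⟩
    · rintro c ⟨W, hW, rfl⟩
      have hinj : Wᶜ.card ≤ Fintype.card {e : A // IsIdempotentElem e ∧ e ≠ 0} := by
        have hle := Finset.card_le_card_of_injOn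
          (f := fun x : clean2Set A =>
            (⟨cE x, cE_idem x, cE_ne_zero x⟩ : {e : A // IsIdempotentElem e ∧ e ≠ 0}))
          (s := Wᶜ) (t := Finset.univ) (fun a _ => Finset.mem_univ _) ?_
        · simpa [Finset.card_univ] using hle
        · intro x hx y hy hexy
          by_contra hxy
          have hcE : cE x = cE y := by simpa [Subtype.ext_iff] using hexy
          have hmmd : IsMMD (clean2Graph A) x y := by
            by_cases h1 : cE x = 1
            · exact c2_mmd_ones hu h₀ h₀0 h₀1 h1 (hcE ▸ h1)
                (fun h => hxy (vtx_ext hcE h))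
            · exact c2_mmd_same_idem hu hxy hcE h1
          have hx' : x ∉ W := Finset.mem_compl.mp hx
          have hy' : y ∉ W := Finset.mem_compl.mp hy
          rcases aux_srs_mem_of_mmd hconn hW hxy hmmd with h | h
          · exact hx' h
          · exact hy' h
      have h2 : Wᶜ.card = Fintype.card (clean2Set A) - W.card := Finset.card_compl W
      have h3 : W.card ≤ Fintype.card (clean2Set A) := Finset.card_le_univ W
      rw [Nat.card_eq_fintype_card, Nat.card_eq_fintype_card]
      omega

end SdimCases
theorem statement_17 (n : ℕ) (hn : 2 ≤ n) (R : Fin n → Type*)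
    [∀ i, CommRing (R i)] [∀ i, Finite (R i)] [∀ i, IsLocalRing (R i)]
    (hU'' : uSecond (∀ i, R i) = ∅) :
    (Nat.card (∀ i, R i)ˣ = 1 → sdim (clean2Graph (∀ i, R i)) = 2 ^ n - 2) ∧
    (2 ≤ Nat.card (∀ i, R i)ˣ →
      sdim (clean2Graph (∀ i, R i)) =
        (2 ^ n - 1) * Nat.card (∀ i, R i)ˣ - 2 ^ n + 1) := by
  classical
  have hu : ∀ u : (∀ i, R i)ˣ, u * u = 1 := by
    intro u
    have h1 : u ∉ uSecond (∀ i, R i) := by rw [hU'']; exact Set.notMem_empty u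
    have h2 : ((u : ∀ i, R i) * u = 1) := not_not.mp h1
    exact Units.ext (by simpa using h2)
  have hnt : Nontrivial (∀ i, R i) :=
    ⟨0, 1, fun h => zero_ne_one (congrFun h ⟨0, by omega⟩)⟩
  set e₀ : ∀ i, R i := fun i => if i = (⟨0, by omega⟩ : Fin n) then 1 else 0 with he₀
  have h₀ : IsIdempotentElem e₀ := by
    funext i
    by_cases h : i = (⟨0, by omega⟩ : Fin n) <;> simp [he₀, h, Pi.mul_apply]
  have h₀0 : e₀ ≠ 0 := by
    intro h
    have h2 := congrFun h (⟨0, by omega⟩ : Fin n)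
    simp [he₀] at h2
  have h₀1 : e₀ ≠ 1 := by
    intro h
    have h2 := congrFun h (⟨1, by omega⟩ : Fin n)
    have hne : (⟨1, by omega⟩ : Fin n) ≠ (⟨0, by omega⟩ : Fin n) := by
      simp [Fin.ext_iff]
    simp [he₀, hne] at h2
  have hkE := card_idem_star R
  have hVcard : Nat.card (clean2Set (∀ i, R i)) =
      Nat.card {e : (∀ i, R i) // IsIdempotentElem e ∧ e ≠ 0} * Nat.card (∀ i, R i)ˣ := by
    rw [← Nat.card_prod]
    exact Nat.card_congr
      { toFun := fun x => (⟨cE x, cE_idem x, cE_ne_zero x⟩, cU x)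
        invFun := fun p => vtx p.1.1 p.1.2.1 p.1.2.2 p.2
        left_inv := fun x => vtx_ext rfl rfl
        right_inv := fun p => rfl }
  have h4 : 4 ≤ 2 ^ n := by
    calc (4:ℕ) = 2 ^ 2 := rfl
    _ ≤ 2 ^ n := Nat.pow_le_pow_right (by norm_num) hn
  constructor
  · intro hm
    rw [sdim_case1 hu hm, hVcard, hkE, hm, mul_one]
    omega
  · intro hm
    rw [sdim_case2 hu h₀ h₀0 h₀1 hm, hVcard, hkE]
    have h5 : (2 ^ n - 1) * 2 ≤ (2 ^ n - 1) * Nat.card (∀ i, R i)ˣ :=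
      Nat.mul_le_mul_left _ hm
    omega
end
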